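/- arXiv:2512.19003 — 12 statements merged into one kernel-verified Lean document; each statement's English description precedes it below -/
import Mathlib

section
/- Let V : ℝ → ℝ be a convex function. Then for all x, y, u, w ∈ ℝ, V(x - u) + V(y - w) ≥ V(min(x,y) - min(u,w)) + V(max(x,y) - max(u,w)). -/
/-!
The reflection `c ↦ a + b - c` of a point of the segment `[a, b]` is again in the segment, with
the barycentric weights swapped, so adding the two convexity inequalities gives
`V c + V (a + b - c) ≤ V a + V b`. After ordering `x ≤ y`, the claim is trivial when `u ≤ w`;
when `w ≤ u` it is this inequality for `x - u ≤ x - w ≤ y - w`, whose reflection is `y - u`.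
-/

open Set

theorem ConvexOn.map_add_map_add_sub_le {𝕜 E β : Type*} [Semiring 𝕜] [PartialOrder 𝕜]
    [AddCommGroup E] [Module 𝕜 E] [AddCommGroup β] [PartialOrder β] [IsOrderedAddMonoid β]
    [Module 𝕜 β] {s : Set E} {f : E → β} (hf : ConvexOn 𝕜 s f) {a b c : E} (ha : a ∈ s)
    (hb : b ∈ s) (hc : c ∈ segment 𝕜 a b) :
    f c + f (a + b - c) ≤ f a + f b := by
  obtain ⟨p, q, hp, hq, hpq, rfl⟩ := hc
  have hreflect : a + b - (p • a + q • b) = q • a + p • b :=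
    calc a + b - (p • a + q • b) = (p + q) • a + (p + q) • b - (p • a + q • b) := by
          rw [hpq, one_smul, one_smul]
      _ = q • a + p • b := by simp only [add_smul]; abel
  rw [hreflect]
  calc f (p • a + q • b) + f (q • a + p • b)
      ≤ (p • f a + q • f b) + (q • f a + p • f b) :=
        add_le_add (hf.2 ha hb hp hq hpq) (hf.2 ha hb hq hp ((add_comm q p).trans hpq))
    _ = (p + q) • f a + (p + q) • f b := by simp only [add_smul]; abel
    _ = f a + f b := by rw [hpq, one_smul, one_smul]

theorem convex_submodular_shift (V : ℝ → ℝ) (hV : ConvexOn ℝ Set.univ V)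
    (x y u w : ℝ) :
    V (min x y - min u w) + V (max x y - max u w) ≤ V (x - u) + V (y - w) := by
  wlog hxy : x ≤ y generalizing x y u w
  · simpa only [min_comm, max_comm, add_comm (V (x - u))] using this y x w u (le_of_not_ge hxy)
  rcases le_total u w with huw | hwu
  · rw [min_eq_left hxy, max_eq_right hxy, min_eq_left huw, max_eq_right huw]
  · rw [min_eq_left hxy, max_eq_right hxy, min_eq_right hwu, max_eq_left hwu]
    have hmem : x - w ∈ segment ℝ (x - u) (y - w) :=
      Icc_subset_segment ⟨by linarith, by linarith⟩
    have hreflect : x - u + (y - w) - (x - w) = y - u := by ring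
    simpa only [hreflect] using hV.map_add_map_add_sub_le (mem_univ _) (mem_univ _) hmem
end

section
/- Let g : ℝ^d → [0,∞) be a product of log-concave functions, g(z) = ∏_{i=1}^d g_i(z_i) with each g_i : ℝ → [0,∞) log-concave. Then for all x, y, u, w ∈ ℝ^d, g(x - u)·g(y - w) ≤ g(x ∧ y - u ∧ w)·g(x ∨ y - u ∨ w), where ∧ and ∨ are componentwise minimum and maximum. -/
/-!
Both sides factor over the coordinates, so it suffices to compare factors. In one coordinate the
two arguments on the right have the same sum as the two on the left and are either the same pair or
lie strictly between them. Writing the inner pair as `(1 - t) a + t b` and `t a + (1 - t) b`,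
log-concavity bounds their values below by `f a ^ (1 - t) * f b ^ t` and `f a ^ t * f b ^ (1 - t)`,
whose product is `f a * f b`.
-/

open Set

def IsLogConcave (f : ℝ → ℝ) : Prop :=
  ∀ a b : ℝ, ∀ t ∈ Ioo (0 : ℝ) 1, f a ^ (1 - t) * f b ^ t ≤ f ((1 - t) * a + t * b)

namespace IsLogConcave

variable {f : ℝ → ℝ}

theorem mul_le_mul_of_shift_inward (hf : IsLogConcave f) (hnn : ∀ x, 0 ≤ f x) {a b s : ℝ}
    (hs₀ : 0 ≤ s) (hs : s ≤ b - a) : f a * f b ≤ f (a + s) * f (b - s) := by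
  rcases hs₀.eq_or_lt with rfl | hs₀
  · simp
  rcases hs.eq_or_lt with rfl | hs
  · rw [add_sub_cancel, sub_sub_cancel, mul_comm]
  have hba : 0 < b - a := hs₀.trans hs
  set t := s / (b - a)
  have ht : t ∈ Ioo (0 : ℝ) 1 := ⟨div_pos hs₀ hba, (div_lt_one hba).2 hs⟩
  have ht' : 1 - t ∈ Ioo (0 : ℝ) 1 := ⟨by linarith [ht.2], by linarith [ht.1]⟩
  have hst : s = t * (b - a) := (div_mul_cancel₀ s hba.ne').symm
  have split (x : ℝ) (hx : 0 ≤ x) : x = x ^ (1 - t) * x ^ t := by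
    rw [← Real.rpow_add' hx (by norm_num), sub_add_cancel, Real.rpow_one]
  calc f a * f b = (f a ^ (1 - t) * f b ^ t) * (f a ^ (1 - (1 - t)) * f b ^ (1 - t)) := by
        rw [sub_sub_cancel, mul_mul_mul_comm, ← split _ (hnn a), mul_comm (f b ^ t),
          ← split _ (hnn b)]
    _ ≤ f ((1 - t) * a + t * b) * f ((1 - (1 - t)) * a + (1 - t) * b) :=
        mul_le_mul (hf a b t ht) (hf a b _ ht')
          (mul_nonneg (Real.rpow_nonneg (hnn a) _) (Real.rpow_nonneg (hnn b) _)) (hnn _)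
    _ = f (a + s) * f (b - s) := by
        rw [hst]; congr 1 <;> congr 1 <;> ring

theorem mul_le_mul_inf_sup (hf : IsLogConcave f) (hnn : ∀ x, 0 ≤ f x) (a b p q : ℝ) :
    f (a - p) * f (b - q) ≤ f (a ⊓ b - p ⊓ q) * f (a ⊔ b - p ⊔ q) := by
  wlog hab : a ≤ b generalizing a b p q
  · rw [mul_comm, inf_comm, inf_comm p, sup_comm, sup_comm p]
    exact this b a q p (le_of_not_ge hab)
  rw [inf_of_le_left hab, sup_of_le_right hab]
  rcases le_total p q with hpq | hqp
  · rw [inf_of_le_left hpq, sup_of_le_right hpq]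
  · rw [inf_of_le_right hqp, sup_of_le_left hqp]
    have := hf.mul_le_mul_of_shift_inward hnn (sub_nonneg.2 hqp)
      (show p - q ≤ b - q - (a - p) by linarith)
    rwa [sub_add_sub_cancel, sub_sub_sub_cancel_right] at this

end IsLogConcave

theorem logConcave_product_condition (d : ℕ) (g : (Fin d → ℝ) → ℝ)
    (gi : Fin d → ℝ → ℝ) (hnn : ∀ i x, 0 ≤ gi i x)
    (hlc : ∀ i, ∀ a b : ℝ, ∀ t ∈ Set.Ioo (0:ℝ) 1,
      gi i a ^ (1 - t) * gi i b ^ t ≤ gi i ((1 - t) * a + t * b))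
    (hg : ∀ z, g z = ∏ i, gi i (z i))
    (x y u w : Fin d → ℝ) :
    g (x - u) * g (y - w) ≤ g (x ⊓ y - u ⊓ w) * g (x ⊔ y - u ⊔ w) := by
  simp only [hg, ← Finset.prod_mul_distrib]
  exact Finset.prod_le_prod (fun i _ => mul_nonneg (hnn i _) (hnn i _))
    fun i _ => IsLogConcave.mul_le_mul_inf_sup (hlc i) (hnn i) _ _ _ _
end

section
/- (Four function theorem on ℤ^d) Let f₁, f₂, f₃, f₄ : ℤ^d → [0,∞) be summable functions such that f₁(x)·f₂(y) ≤ f₃(x ∧ y)·f₄(x ∨ y) for all x, y ∈ ℤ^d, where ∧, ∨ are componentwise min and max. Then (∑ f₁)(∑ f₂) ≤ (∑ f₃)(∑ f₄). -/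
theorem ahlswede_daykin_int_lattice (d : ℕ) (f₁ f₂ f₃ f₄ : (Fin d → ℤ) → ℝ)
    (hnn₁ : ∀ x, 0 ≤ f₁ x) (hnn₂ : ∀ x, 0 ≤ f₂ x)
    (hnn₃ : ∀ x, 0 ≤ f₃ x) (hnn₄ : ∀ x, 0 ≤ f₄ x)
    (hs₁ : Summable f₁) (hs₂ : Summable f₂) (hs₃ : Summable f₃) (hs₄ : Summable f₄)
    (h : ∀ x y, f₁ x * f₂ y ≤ f₃ (x ⊓ y) * f₄ (x ⊔ y)) :
    (∑' x, f₁ x) * (∑' y, f₂ y) ≤ (∑' x, f₃ x) * (∑' y, f₄ y) := by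
  classical
  have key : ∀ s : Finset (Fin d → ℤ),
      (∑ a ∈ s, f₁ a) * (∑ a ∈ s, f₂ a) ≤ (∑' x, f₃ x) * (∑' y, f₄ y) := by
    intro s
    have h4 := four_functions_theorem f₁ f₂ f₃ f₄ (fun x => hnn₁ x) (fun x => hnn₂ x)
      (fun x => hnn₃ x) (fun x => hnn₄ x) h s s
    refine h4.trans (mul_le_mul ?_ ?_ ?_ ?_)
    · exact Summable.sum_le_tsum _ (fun i _ => hnn₃ i) hs₃
    · exact Summable.sum_le_tsum _ (fun i _ => hnn₄ i) hs₄
    · exact Finset.sum_nonneg fun i _ => hnn₄ i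
    · exact tsum_nonneg hnn₃
  have h1 : Filter.Tendsto (fun s : Finset (Fin d → ℤ) => ∑ a ∈ s, f₁ a)
      Filter.atTop (nhds (∑' x, f₁ x)) := hs₁.hasSum
  have h2 : Filter.Tendsto (fun s : Finset (Fin d → ℤ) => ∑ a ∈ s, f₂ a)
      Filter.atTop (nhds (∑' x, f₂ x)) := hs₂.hasSum
  exact le_of_tendsto (h1.mul h2) (Filter.Eventually.of_forall key)
end

section
/- (Euclidean four function theorem, Batty–Bollmann) Let f₁, f₂, f₃, f₄ : ℝ^d → [0,∞) be Lebesgue integrable functions such that f₁(x)·f₂(y) ≤ f₃(x ∧ y)·f₄(x ∨ y) for all x, y ∈ ℝ^d. Then (∫ f₁)·(∫ f₂) ≤ (∫ f₃)·(∫ f₄), where integration is with respect to Lebesgue measure. -/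
/-!
On a linear order, the hypothesis at the pairs `(x, y)`, `(y, x)`, `(x, x)`, `(y, y)` gives the
two-point inequality `f₁ x f₂ y + f₂ x f₁ y ≤ f₃ x f₄ y + f₄ x f₃ y`; integrating it in both
variables proves the inequality for every measure on a linear order. Since the lattice operations
on a product are coordinatewise, Tonelli's theorem applied to the fibre integrals shows that the
inequality for `μ` and for `ν` implies it for `μ.prod ν`; induction on `d` then gives it on `ℝ^d`.
Measurability of `f₁, f₂` is removed by passing to measurable minorants with the same integral,
and that of `f₃, f₄` by measurable majorants that agree with them almost everywhere.
-/

open MeasureTheory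

open scoped ENNReal

theorem add_le_add_of_mul_le_mul {R : Type*} [CommSemiring R] [LinearOrder R]
    [IsStrictOrderedRing R] [ExistsAddOfLE R] {u v w z : R} (hw : 0 < w) (hu : u ≤ w)
    (hv : v ≤ w) (huv : u * v ≤ w * z) : u + v ≤ w + z := by
  refine le_of_mul_le_mul_left ?_ hw
  calc w * (u + v) = u * w + w * v := by ring
    _ ≤ u * v + w * w := mul_add_mul_le_mul_add_mul hu hv -- `(w - u) * (w - v) ≥ 0`
    _ ≤ w * z + w * w := by gcongr
    _ = w * (w + z) := by ring

theorem ENNReal.add_le_add_of_mul_le_mul {u v w z : ℝ≥0∞} (hu : u ≤ w) (hv : v ≤ w)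
    (huv : u * v ≤ w * z) : u + v ≤ w + z := by
  rcases eq_or_ne w 0 with rfl | hw₀
  · simp [nonpos_iff_eq_zero.mp hu, nonpos_iff_eq_zero.mp hv]
  rcases eq_or_ne w ∞ with rfl | hw
  · simp
  rcases eq_or_ne z ∞ with rfl | hz
  · simp
  lift w to NNReal using hw
  lift z to NNReal using hz
  lift u to NNReal using ne_top_of_le_ne_top coe_ne_top hu
  lift v to NNReal using ne_top_of_le_ne_top coe_ne_top hv
  norm_cast at *
  exact _root_.add_le_add_of_mul_le_mul (pos_iff_ne_zero.2 hw₀) hu hv huv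

variable {α β : Type*}

theorem four_functions_two_points [LinearOrder α] {f₁ f₂ f₃ f₄ : α → ℝ≥0∞}
    (h : ∀ x y, f₁ x * f₂ y ≤ f₃ (x ⊓ y) * f₄ (x ⊔ y)) (x y : α) :
    f₁ x * f₂ y + f₂ x * f₁ y ≤ f₃ x * f₄ y + f₄ x * f₃ y := by
  wlog hxy : x ≤ y generalizing x y
  · simpa only [add_comm, mul_comm] using this y x (le_of_not_ge hxy)
  have hx := h x x
  have hy := h y y
  simp only [inf_idem, sup_idem] at hx hy
  rw [mul_comm (f₂ x), mul_comm (f₄ x)]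
  refine ENNReal.add_le_add_of_mul_le_mul ?_ ?_ ?_
  · simpa [hxy] using h x y
  · simpa [hxy] using h y x
  · calc f₁ x * f₂ y * (f₁ y * f₂ x) = f₁ x * f₂ x * (f₁ y * f₂ y) := by ring
      _ ≤ f₃ x * f₄ x * (f₃ y * f₄ y) := mul_le_mul' hx hy
      _ = f₃ x * f₄ y * (f₃ y * f₄ x) := by ring

variable [MeasurableSpace α] [MeasurableSpace β]

theorem lintegral_const_mul_add_const_mul {μ : Measure α} {g h : α → ℝ≥0∞}
    (hg : Measurable g) (hh : Measurable h) (a b : ℝ≥0∞) :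
    ∫⁻ x, (a * g x + b * h x) ∂μ = a * ∫⁻ x, g x ∂μ + b * ∫⁻ x, h x ∂μ := by
  rw [lintegral_add_left (hg.const_mul a), lintegral_const_mul a hg, lintegral_const_mul b hh]

theorem AEMeasurable.exists_measurable_ge_ae_eq [Preorder β] [OrderTop β] {μ : Measure α}
    {f : α → β} (hf : AEMeasurable f μ) : ∃ g, Measurable g ∧ f ≤ g ∧ g =ᵐ[μ] f := by
  classical
  obtain ⟨s, hs, hsm, hs₀⟩ := exists_measurable_superset_of_null (ae_iff.mp hf.ae_eq_mk)
  have hfs : ∀ x ∉ s, f x = hf.mk f x := fun x hx => not_not.mp fun hne => hx (hs hne)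
  refine ⟨s.piecewise (fun _ => ⊤) (hf.mk f),
    Measurable.piecewise hsm measurable_const hf.measurable_mk, fun x => ?_, ?_⟩
  · by_cases hx : x ∈ s
    · simp [hx]
    · simp [hx, hfs x hx]
  · filter_upwards [measure_eq_zero_iff_ae_notMem.mp hs₀] with x hx
    simp [hx, hfs x hx]

def HasFourFunctionsProperty [Lattice α] (μ : Measure α) : Prop :=
  ∀ f₁ f₂ f₃ f₄ : α → ℝ≥0∞, Measurable f₁ → Measurable f₂ → Measurable f₃ → Measurable f₄ →
    (∀ x y, f₁ x * f₂ y ≤ f₃ (x ⊓ y) * f₄ (x ⊔ y)) →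
    (∫⁻ x, f₁ x ∂μ) * ∫⁻ x, f₂ x ∂μ ≤ (∫⁻ x, f₃ x ∂μ) * ∫⁻ x, f₄ x ∂μ

theorem hasFourFunctionsProperty_of_linearOrder [LinearOrder α] (μ : Measure α) :
    HasFourFunctionsProperty μ := by
  intro f₁ f₂ f₃ f₄ m₁ m₂ m₃ m₄ h
  set A := ∫⁻ x, f₁ x ∂μ
  set B := ∫⁻ x, f₂ x ∂μ
  set C := ∫⁻ x, f₃ x ∂μ
  set D := ∫⁻ x, f₄ x ∂μ
  have hfibre : ∀ x, B * f₁ x + A * f₂ x ≤ D * f₃ x + C * f₄ x := fun x =>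
    calc B * f₁ x + A * f₂ x = ∫⁻ y, (f₁ x * f₂ y + f₂ x * f₁ y) ∂μ := by
          rw [lintegral_const_mul_add_const_mul m₂ m₁]; ring
      _ ≤ ∫⁻ y, (f₃ x * f₄ y + f₄ x * f₃ y) ∂μ :=
          lintegral_mono fun y => four_functions_two_points h x y
      _ = D * f₃ x + C * f₄ x := by rw [lintegral_const_mul_add_const_mul m₄ m₃]; ring
  have h2 : 2 * (A * B) ≤ 2 * (C * D) :=
    calc 2 * (A * B) = ∫⁻ x, (B * f₁ x + A * f₂ x) ∂μ := by
          rw [lintegral_const_mul_add_const_mul m₁ m₂]; ring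
      _ ≤ ∫⁻ x, (D * f₃ x + C * f₄ x) ∂μ := lintegral_mono hfibre
      _ = 2 * (C * D) := by rw [lintegral_const_mul_add_const_mul m₃ m₄]; ring
  exact (ENNReal.mul_le_mul_iff_right two_ne_zero ENNReal.ofNat_ne_top).1 h2

theorem hasFourFunctionsProperty_dirac [Lattice α] (a : α) :
    HasFourFunctionsProperty (Measure.dirac a) := by
  intro f₁ f₂ f₃ f₄ m₁ m₂ m₃ m₄ h
  simpa only [lintegral_dirac' a m₁, lintegral_dirac' a m₂, lintegral_dirac' a m₃,
    lintegral_dirac' a m₄, inf_idem, sup_idem] using h a a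

theorem HasFourFunctionsProperty.prod [Lattice α] [Lattice β] {μ : Measure α} {ν : Measure β}
    [SFinite ν] (hμ : HasFourFunctionsProperty μ) (hν : HasFourFunctionsProperty ν) :
    HasFourFunctionsProperty (μ.prod ν) := by
  intro f₁ f₂ f₃ f₄ m₁ m₂ m₃ m₄ h
  rw [lintegral_prod _ m₁.aemeasurable, lintegral_prod _ m₂.aemeasurable,
    lintegral_prod _ m₃.aemeasurable, lintegral_prod _ m₄.aemeasurable]
  refine hμ _ _ _ _ m₁.lintegral_prod_right' m₂.lintegral_prod_right' m₃.lintegral_prod_right'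
    m₄.lintegral_prod_right' fun x x' => ?_
  exact hν _ _ _ _ (m₁.comp measurable_prodMk_left) (m₂.comp measurable_prodMk_left)
    (m₃.comp measurable_prodMk_left) (m₄.comp measurable_prodMk_left)
    fun y y' => h (x, y) (x', y')

theorem HasFourFunctionsProperty.of_measurePreserving [Lattice α] [Lattice β] {μ : Measure α}
    {ν : Measure β} (hμ : HasFourFunctionsProperty μ) (e : α ≃ᵐ β)
    (he : MeasurePreserving e μ ν) (he_le : ∀ x y, e x ≤ e y ↔ x ≤ y) :
    HasFourFunctionsProperty ν := by
  let o : α ≃o β := ⟨e.toEquiv, he_le _ _⟩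
  intro f₁ f₂ f₃ f₄ m₁ m₂ m₃ m₄ h
  rw [he.lintegral_map_equiv _ e, he.lintegral_map_equiv _ e, he.lintegral_map_equiv _ e,
    he.lintegral_map_equiv _ e]
  refine hμ _ _ _ _ (m₁.comp e.measurable) (m₂.comp e.measurable) (m₃.comp e.measurable)
    (m₄.comp e.measurable) fun x y => ?_
  have hinf : e (x ⊓ y) = e x ⊓ e y := o.map_inf x y
  have hsup : e (x ⊔ y) = e x ⊔ e y := o.map_sup x y
  simpa only [Function.comp_apply, hinf, hsup] using h (e x) (e y)

theorem hasFourFunctionsProperty_pi [LinearOrder α] (μ : Measure α) [SigmaFinite μ] :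
    ∀ d : ℕ, HasFourFunctionsProperty (Measure.pi fun _ : Fin d => μ)
  | 0 => by rw [Measure.pi_of_empty]; exact hasFourFunctionsProperty_dirac _
  | d + 1 =>
    ((hasFourFunctionsProperty_of_linearOrder μ).prod
      (hasFourFunctionsProperty_pi μ d)).of_measurePreserving
      (MeasurableEquiv.piFinSuccAbove (fun _ => α) 0).symm
      (measurePreserving_piFinSuccAbove (fun _ => μ) 0).symm
      fun _ _ => (Fin.insertNthOrderIso (fun _ => α) 0).le_iff_le

theorem HasFourFunctionsProperty.lintegral_mul_le [Lattice α] {μ : Measure α}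
    (hμ : HasFourFunctionsProperty μ) {f₁ f₂ f₃ f₄ : α → ℝ≥0∞} (hf₃ : AEMeasurable f₃ μ)
    (hf₄ : AEMeasurable f₄ μ) (h : ∀ x y, f₁ x * f₂ y ≤ f₃ (x ⊓ y) * f₄ (x ⊔ y)) :
    (∫⁻ x, f₁ x ∂μ) * ∫⁻ x, f₂ x ∂μ ≤ (∫⁻ x, f₃ x ∂μ) * ∫⁻ x, f₄ x ∂μ := by
  obtain ⟨g₁, m₁, hg₁, e₁⟩ := exists_measurable_le_lintegral_eq μ f₁
  obtain ⟨g₂, m₂, hg₂, e₂⟩ := exists_measurable_le_lintegral_eq μ f₂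
  obtain ⟨g₃, m₃, hg₃, e₃⟩ := hf₃.exists_measurable_ge_ae_eq
  obtain ⟨g₄, m₄, hg₄, e₄⟩ := hf₄.exists_measurable_ge_ae_eq
  rw [e₁, e₂, ← lintegral_congr_ae e₃, ← lintegral_congr_ae e₄]
  exact hμ g₁ g₂ g₃ g₄ m₁ m₂ m₃ m₄ fun x y =>
    (mul_le_mul' (hg₁ x) (hg₂ y)).trans ((h x y).trans (mul_le_mul' (hg₃ _) (hg₄ _)))

theorem batty_bollmann (d : ℕ) (f₁ f₂ f₃ f₄ : (Fin d → ℝ) → ℝ)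
    (hnn₁ : ∀ x, 0 ≤ f₁ x) (hnn₂ : ∀ x, 0 ≤ f₂ x)
    (hnn₃ : ∀ x, 0 ≤ f₃ x) (hnn₄ : ∀ x, 0 ≤ f₄ x)
    (hi₁ : Integrable f₁) (hi₂ : Integrable f₂) (hi₃ : Integrable f₃) (hi₄ : Integrable f₄)
    (h : ∀ x y, f₁ x * f₂ y ≤ f₃ (x ⊓ y) * f₄ (x ⊔ y)) :
    (∫ x, f₁ x) * (∫ y, f₂ y) ≤ (∫ x, f₃ x) * (∫ y, f₄ y) := by
  have hofReal : ∀ f : (Fin d → ℝ) → ℝ, (∀ x, 0 ≤ f x) → Integrable f →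
      ENNReal.ofReal (∫ x, f x) = ∫⁻ x, ENNReal.ofReal (f x) :=
    fun f hf hi => ofReal_integral_eq_lintegral_ofReal hi (Filter.Eventually.of_forall hf)
  have key := (hasFourFunctionsProperty_pi (volume : Measure ℝ) d).lintegral_mul_le
    (f₁ := fun x => ENNReal.ofReal (f₁ x)) (f₂ := fun x => ENNReal.ofReal (f₂ x))
    hi₃.aemeasurable.ennreal_ofReal hi₄.aemeasurable.ennreal_ofReal fun x y => by
      rw [← ENNReal.ofReal_mul (hnn₁ x), ← ENNReal.ofReal_mul (hnn₃ _)]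
      exact ENNReal.ofReal_le_ofReal (h x y)
  rw [← volume_pi, ← hofReal f₁ hnn₁ hi₁, ← hofReal f₂ hnn₂ hi₂, ← hofReal f₃ hnn₃ hi₃,
    ← hofReal f₄ hnn₄ hi₄, ← ENNReal.ofReal_mul (integral_nonneg hnn₁),
    ← ENNReal.ofReal_mul (integral_nonneg hnn₃)] at key
  exact (ENNReal.ofReal_le_ofReal_iff (mul_nonneg (integral_nonneg hnn₃)
    (integral_nonneg hnn₄))).1 key
end

section
/- Assume the Euclidean four function theorem: if h₁(x)h₂(y) ≤ h₃(x∧y)h₄(x∨y) for all x, y ∈ ℝ^d then (∫h₁)(∫h₂) ≤ (∫h₃)(∫h₄). Let f : ℝ^d → [0,∞) be an integrable log-supermodular function and g : ℝ^d → [0,∞) an integrable function satisfying g(x-u)g(y-w) ≤ g(x∧y - u∧w)·g(x∨y - u∨w) for all x, y, u, w. Then the convolution f * g is log-supermodular. -/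
/-!
The hypothesis on `g` at `x = c`, `y = c + δ`, `u = δ`, `w = 0` is the midpoint inequality
`g (c - δ) * g (c + δ) ≤ g c ^ 2`. Integrating it over `{1 ≤ g}` after the change of variables
`z ↦ (a + z) / 2`, whose Jacobian is `2 ^ d`, bounds `g a` uniformly unless `{1 ≤ g}` is null; so
`g` is essentially bounded and each `z ↦ f z * g (x - z)` is integrable. The four function theorem
then applies to `f * g (x - ·)`, `f * g (y - ·)`, `f * g (x ⊓ y - ·)`, `f * g (x ⊔ y - ·)`, whose
hypothesis is the product of those on `f` and on `g`.
-/
open MeasureTheory Module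
open scoped ENNReal

theorem apply_sub_mul_apply_add_le_mul_self {E R : Type*} [AddGroup E] [Lattice E] [AddLeftMono E]
    [Mul R] [LE R] {g : E → R}
    (hg : ∀ x y u w, g (x - u) * g (y - w) ≤ g (x ⊓ y - u ⊓ w) * g (x ⊔ y - u ⊔ w)) (c δ : E) :
    g (c - δ) * g (c + δ) ≤ g c * g c := by
  have hinf : c ⊓ (c + δ) = c + δ ⊓ 0 := by rw [add_inf, add_zero, inf_comm]
  have hsup : c ⊔ (c + δ) = c + δ ⊔ 0 := by rw [add_sup, add_zero, sup_comm]
  simpa only [sub_zero, hinf, hsup, add_sub_cancel_right] using hg c (c + δ) δ 0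

section HaarMeasure

variable {E : Type*} [NormedAddCommGroup E] [NormedSpace ℝ E] [MeasurableSpace E] [BorelSpace E]
  [FiniteDimensional ℝ E] {μ : Measure E} [μ.IsAddHaarMeasure] {g : E → ℝ}

theorem sqrt_apply_mul_measureReal_le_two_pow_mul_integral (hg0 : ∀ x, 0 ≤ g x)
    (hgi : Integrable g μ)
    (hmid : ∀ c δ, g (c - δ) * g (c + δ) ≤ g c * g c) (a : E) :
    √(g a) * μ.real {z | 1 ≤ g z} ≤ 2 ^ finrank ℝ E * ∫ z, g z ∂μ := by
  set ψ : E → E := fun z => (2 : ℝ)⁻¹ • (a + z)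
  have hψi : Integrable (fun z => g (ψ z)) μ := (hgi.comp_smul (by norm_num)).comp_add_left a
  have hψ : ∫ z, g (ψ z) ∂μ = 2 ^ finrank ℝ E * ∫ z, g z ∂μ := by
    rw [integral_add_left_eq_self (fun z => g ((2 : ℝ)⁻¹ • z)), Measure.integral_comp_smul, inv_pow,
      inv_inv, abs_of_pos (by positivity), smul_eq_mul]
  rcases (hg0 a).eq_or_lt with ha | ha
  · rw [← ha, Real.sqrt_zero, zero_mul]
    exact hψ ▸ integral_nonneg fun z => hg0 _
  -- `g a ≤ g a * g z ≤ g (ψ z) ^ 2` on `{1 ≤ g}`: the midpoint inequality with `c = ψ z`.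
  have hsub : {z | 1 ≤ g z} ⊆ {z | √(g a) ≤ g (ψ z)} := by
    intro z hz
    have hmz := hmid (ψ z) ((2 : ℝ)⁻¹ • (z - a))
    have hl : ψ z - (2 : ℝ)⁻¹ • (z - a) = a := by simp only [ψ]; module
    have hr : ψ z + (2 : ℝ)⁻¹ • (z - a) = z := by simp only [ψ]; module
    rw [hl, hr] at hmz
    have hz : 1 ≤ g z := hz
    rw [Set.mem_ofPred_eq, Real.sqrt_le_left (hg0 _)]
    nlinarith [hg0 a]
  have hfin : μ {z | √(g a) ≤ g (ψ z)} ≠ ⊤ := (hψi.measure_ge_lt_top (Real.sqrt_pos.2 ha)).ne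
  calc √(g a) * μ.real {z | 1 ≤ g z} ≤ √(g a) * μ.real {z | √(g a) ≤ g (ψ z)} := by
        gcongr
    _ ≤ ∫ z, g (ψ z) ∂μ :=
        mul_meas_ge_le_integral_of_nonneg (Filter.Eventually.of_forall fun z => hg0 _) hψi _
    _ = _ := hψ

theorem memLp_top_of_mul_le_mul_self_midpoint (hg0 : ∀ x, 0 ≤ g x) (hgi : Integrable g μ)
    (hmid : ∀ c δ, g (c - δ) * g (c + δ) ≤ g c * g c) : MemLp g ∞ μ := by
  set S := {z | 1 ≤ g z}
  suffices ∃ M, ∀ᵐ z ∂μ, g z ≤ M by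
    obtain ⟨M, hM⟩ := this
    exact memLp_top_of_bound hgi.aestronglyMeasurable M
      (hM.mono fun z hz => by rwa [Real.norm_of_nonneg (hg0 z)])
  by_cases hS : μ S = 0
  · refine ⟨1, ae_iff.2 (measure_mono_null (fun z hz => ?_) hS)⟩
    exact (not_le.1 hz).le
  have hS_pos : 0 < μ.real S :=
    ENNReal.toReal_pos hS (hgi.measure_ge_lt_top one_pos).ne
  refine ⟨(2 ^ finrank ℝ E * (∫ z, g z ∂μ) / μ.real S) ^ 2, Filter.Eventually.of_forall fun a => ?_⟩
  have hI : 0 ≤ ∫ z, g z ∂μ := integral_nonneg hg0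
  rw [← Real.sqrt_le_left (by positivity), le_div_iff₀ hS_pos]
  exact sqrt_apply_mul_measureReal_le_two_pow_mul_integral hg0 hgi hmid a

end HaarMeasure

theorem convolution_logSupermodular_of_fourFunction (d : ℕ)
    (fourFunction : ∀ h₁ h₂ h₃ h₄ : (Fin d → ℝ) → ℝ,
      (∀ x, 0 ≤ h₁ x) → (∀ x, 0 ≤ h₂ x) → (∀ x, 0 ≤ h₃ x) → (∀ x, 0 ≤ h₄ x) →
      Integrable h₁ → Integrable h₂ → Integrable h₃ → Integrable h₄ →
      (∀ x y, h₁ x * h₂ y ≤ h₃ (x ⊓ y) * h₄ (x ⊔ y)) →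
      (∫ x, h₁ x) * (∫ y, h₂ y) ≤ (∫ x, h₃ x) * (∫ y, h₄ y))
    (f g : (Fin d → ℝ) → ℝ)
    (hfnn : ∀ x, 0 ≤ f x) (hgnn : ∀ x, 0 ≤ g x)
    (hfi : Integrable f) (hgi : Integrable g)
    (hf : ∀ u w, f u * f w ≤ f (u ⊓ w) * f (u ⊔ w))
    (hg : ∀ x y u w, g (x - u) * g (y - w) ≤ g (x ⊓ y - u ⊓ w) * g (x ⊔ y - u ⊔ w)) :
    ∀ x y, (∫ z, f z * g (x - z)) * (∫ z, f z * g (y - z)) ≤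
      (∫ z, f z * g (x ⊓ y - z)) * (∫ z, f z * g (x ⊔ y - z)) := by
  have hg_top : MemLp g ∞ volume :=
    memLp_top_of_mul_le_mul_self_midpoint hgnn hgi (apply_sub_mul_apply_add_le_mul_self hg)
  have hint (c : Fin d → ℝ) : Integrable fun z => f z * g (c - z) :=
    hfi.mul_of_top_left (hg_top.comp_measurePreserving (Measure.measurePreserving_sub_left _ c))
  have hnn (c : Fin d → ℝ) (z : Fin d → ℝ) : 0 ≤ f z * g (c - z) := mul_nonneg (hfnn z) (hgnn _)
  intro x y
  refine fourFunction _ _ _ _ (hnn x) (hnn y) (hnn _) (hnn _) (hint x) (hint y) (hint _) (hint _)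
    fun u w => ?_
  calc f u * g (x - u) * (f w * g (y - w)) = f u * f w * (g (x - u) * g (y - w)) :=
        mul_mul_mul_comm ..
    _ ≤ f (u ⊓ w) * f (u ⊔ w) * (g (x ⊓ y - u ⊓ w) * g (x ⊔ y - u ⊔ w)) :=
        mul_le_mul (hf u w) (hg x y u w) (mul_nonneg (hgnn _) (hgnn _))
          (mul_nonneg (hfnn _) (hfnn _))
    _ = f (u ⊓ w) * g (x ⊓ y - u ⊓ w) * (f (u ⊔ w) * g (x ⊔ y - u ⊔ w)) :=
        mul_mul_mul_comm ..
end

section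
/- Let f : ℝ^d → [0,∞) be integrable and log-supermodular, and let g be the standard Gaussian density g(x) = (2π)^{-d/2} exp(-|x|²/2). Then f * g is log-supermodular. -/
/-!
The kernel `(x, z) ↦ g (x - z)` is log-supermodular on `ℝᵈ × ℝᵈ`, because coordinatewise
`(x ⊓ y - u ⊓ w)² + (x ⊔ y - u ⊔ w)² ≤ (x - u)² + (y - w)²`. Hence for fixed `x, y` the four
integrands `z ↦ f z * g (x - z)`, `z ↦ f z * g (y - z)`, `z ↦ f z * g (x ⊓ y - z)`,
`z ↦ f z * g (x ⊔ y - z)` satisfy the hypothesis of the four functions (Ahlswede–Daykin)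
inequality for Lebesgue measure on `ℝᵈ`. That inequality tensorises, so it reduces to a linearly
ordered line, where it follows by symmetrising the double integral and the elementary fact that
`s, t ≤ M` and `s t ≤ M N` imply `s + t ≤ M + N`.
-/

open MeasureTheory Real

open scoped ENNReal

theorem ENNReal.add_le_add_of_mul_le_mul_s10 {s t M N : ℝ≥0∞} (hs : s ≤ M) (ht : t ≤ M)
    (hst : s * t ≤ M * N) : s + t ≤ M + N := by
  rcases eq_or_ne M ⊤ with rfl | hM
  · simp
  rcases eq_or_ne N ⊤ with rfl | hN
  · simp
  lift M to NNReal using hM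
  lift N to NNReal using hN
  lift s to NNReal using ne_top_of_le_ne_top coe_ne_top hs
  lift t to NNReal using ne_top_of_le_ne_top coe_ne_top ht
  norm_cast at hs ht hst ⊢
  rcases eq_zero_or_pos M with rfl | hM0
  · simp [nonpos_iff_eq_zero.1 hs, nonpos_iff_eq_zero.1 ht]
  refine le_of_mul_le_mul_left ?_ hM0
  calc M * (s + t) = s * M + M * t := by ring
    _ ≤ s * t + M * M := mul_add_mul_le_mul_add_mul hs ht
    _ ≤ M * N + M * M := by gcongr
    _ = M * (M + N) := by ring

theorem AEMeasurable.exists_measurable_ge_lintegral_eq {α : Type*} [MeasurableSpace α]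
    {μ : Measure α} {f : α → ℝ≥0∞} (hf : AEMeasurable f μ) :
    ∃ g : α → ℝ≥0∞, Measurable g ∧ f ≤ g ∧ ∫⁻ a, g a ∂μ = ∫⁻ a, f a ∂μ := by
  classical
  set N := toMeasurable μ {x | f x ≠ hf.mk f x}
  have hN : ∀ᵐ x ∂μ, x ∉ N := by
    refine measure_eq_zero_iff_ae_notMem.1 ?_
    rw [measure_toMeasurable]
    exact ae_iff.1 hf.ae_eq_mk
  refine ⟨N.piecewise (fun _ => ∞) (hf.mk f),
    (Measurable.piecewise (measurableSet_toMeasurable _ _) measurable_const hf.measurable_mk), fun x => ?_,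
    lintegral_congr_ae ?_⟩
  · by_cases hx : x ∈ N
    · simp [hx]
    · have hfx : f x = hf.mk f x := not_not.1 fun hne => hx (subset_toMeasurable _ _ hne)
      simp [hx, hfx]
  · filter_upwards [hN, hf.ae_eq_mk] with x hxN hx
    simp [hxN, hx]

theorem ofReal_integral_le_lintegral_ofReal {α : Type*} [MeasurableSpace α] {μ : Measure α}
    {f : α → ℝ} (hf : 0 ≤ f) : ENNReal.ofReal (∫ x, f x ∂μ) ≤ ∫⁻ x, ENNReal.ofReal (f x) ∂μ := by
  by_cases hfi : Integrable f μ
  · exact (ofReal_integral_eq_lintegral_ofReal hfi (ae_of_all _ hf)).le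
  · simp [integral_undef hfi]

def FourFunctionsProperty {α : Type*} [Lattice α] [MeasurableSpace α] (μ : Measure α) : Prop :=
  ∀ ⦃f₁ f₂ f₃ f₄ : α → ℝ≥0∞⦄, Measurable f₁ → Measurable f₂ → Measurable f₃ → Measurable f₄ →
    (∀ u w, f₁ u * f₂ w ≤ f₃ (u ⊓ w) * f₄ (u ⊔ w)) →
    (∫⁻ x, f₁ x ∂μ) * ∫⁻ x, f₂ x ∂μ ≤ (∫⁻ x, f₃ x ∂μ) * ∫⁻ x, f₄ x ∂μ

namespace FourFunctionsProperty

variable {α β : Type*} [MeasurableSpace α] [MeasurableSpace β]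

theorem of_linearOrder [LinearOrder α] (μ : Measure α) [SFinite μ] : FourFunctionsProperty μ := by
  intro f₁ f₂ f₃ f₄ m₁ m₂ m₃ m₄ h
  have pair : ∀ u w, f₁ u * f₂ w + f₁ w * f₂ u ≤ f₃ u * f₄ w + f₃ w * f₄ u := by
    intro u w
    wlog huw : u ≤ w generalizing u w
    · simpa only [add_comm] using this w u (le_of_not_ge huw)
    have hlow := h u w
    have hhigh := h w u
    have hu := h u u
    have hw := h w w
    simp only [inf_of_le_left huw, sup_of_le_right huw, inf_of_le_right huw,
      sup_of_le_left huw, inf_idem, sup_idem] at hlow hhigh hu hw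
    refine ENNReal.add_le_add_of_mul_le_mul_s10 hlow hhigh ?_
    calc f₁ u * f₂ w * (f₁ w * f₂ u) = f₁ u * f₂ u * (f₁ w * f₂ w) := by ring
      _ ≤ f₃ u * f₄ u * (f₃ w * f₄ w) := mul_le_mul' hu hw
      _ = f₃ u * f₄ w * (f₃ w * f₄ u) := by ring
  have symmetrize : ∀ F G : α → ℝ≥0∞, Measurable F → Measurable G →
      ∫⁻ z, F z.1 * G z.2 + F z.2 * G z.1 ∂μ.prod μ = 2 * ((∫⁻ x, F x ∂μ) * ∫⁻ x, G x ∂μ) := by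
    intro F G hF hG
    rw [lintegral_add_left (by fun_prop), lintegral_prod_mul hF.aemeasurable hG.aemeasurable]
    simp_rw [mul_comm (F _) (G _)]
    rw [lintegral_prod_mul hG.aemeasurable hF.aemeasurable, mul_comm (∫⁻ x, G x ∂μ), two_mul]
  rw [← ENNReal.mul_le_mul_iff_right two_ne_zero ENNReal.ofNat_ne_top, ← symmetrize _ _ m₁ m₂,
    ← symmetrize _ _ m₃ m₄]
  exact lintegral_mono fun z => pair z.1 z.2

variable [Lattice α] [Lattice β]

theorem dirac (a : α) : FourFunctionsProperty (Measure.dirac a) := by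
  intro f₁ f₂ f₃ f₄ m₁ m₂ m₃ m₄ h
  simpa [lintegral_dirac' a, m₁, m₂, m₃, m₄] using h a a

theorem prod {μ : Measure α} {ν : Measure β} [SFinite ν] (hμ : FourFunctionsProperty μ)
    (hν : FourFunctionsProperty ν) : FourFunctionsProperty (μ.prod ν) := by
  intro f₁ f₂ f₃ f₄ m₁ m₂ m₃ m₄ h
  rw [lintegral_prod _ m₁.aemeasurable, lintegral_prod _ m₂.aemeasurable,
    lintegral_prod _ m₃.aemeasurable, lintegral_prod _ m₄.aemeasurable]
  refine hμ m₁.lintegral_prod_right' m₂.lintegral_prod_right' m₃.lintegral_prod_right'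
    m₄.lintegral_prod_right' fun a a' => ?_
  refine hν (m₁.comp measurable_prodMk_left) (m₂.comp measurable_prodMk_left)
    (m₃.comp measurable_prodMk_left) (m₄.comp measurable_prodMk_left) fun b b' => ?_
  exact h (a, b) (a', b')

theorem map_orderIso {μ : Measure α} {ν : Measure β} (hμ : FourFunctionsProperty μ) (e : α ≃o β)
    (he : MeasurePreserving e μ ν) : FourFunctionsProperty ν := by
  intro f₁ f₂ f₃ f₄ m₁ m₂ m₃ m₄ h
  rw [← he.lintegral_comp m₁, ← he.lintegral_comp m₂, ← he.lintegral_comp m₃,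
    ← he.lintegral_comp m₄]
  refine hμ (m₁.comp he.measurable) (m₂.comp he.measurable) (m₃.comp he.measurable)
    (m₄.comp he.measurable) fun u w => ?_
  simpa only [Function.comp_apply, e.map_inf, e.map_sup] using h (e u) (e w)

theorem pi {μ : Measure α} [SigmaFinite μ] (hμ : FourFunctionsProperty μ) :
    ∀ n : ℕ, FourFunctionsProperty (Measure.pi fun _ : Fin n => μ)
  | 0 => by
    rw [Measure.pi_of_empty]
    exact dirac _
  | n + 1 => (hμ.prod (pi hμ n)).map_orderIso (Fin.insertNthOrderIso (fun _ => α) 0)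
      (measurePreserving_piFinSuccAbove (fun _ => μ) 0).symm

theorem lintegral_mul_le {μ : Measure α} (hμ : FourFunctionsProperty μ)
    {f₁ f₂ f₃ f₄ : α → ℝ≥0∞} (hf₃ : AEMeasurable f₃ μ) (hf₄ : AEMeasurable f₄ μ)
    (h : ∀ u w, f₁ u * f₂ w ≤ f₃ (u ⊓ w) * f₄ (u ⊔ w)) :
    (∫⁻ x, f₁ x ∂μ) * ∫⁻ x, f₂ x ∂μ ≤ (∫⁻ x, f₃ x ∂μ) * ∫⁻ x, f₄ x ∂μ := by
  obtain ⟨g₁, m₁, hg₁, e₁⟩ := exists_measurable_le_lintegral_eq μ f₁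
  obtain ⟨g₂, m₂, hg₂, e₂⟩ := exists_measurable_le_lintegral_eq μ f₂
  obtain ⟨g₃, m₃, hg₃, e₃⟩ := hf₃.exists_measurable_ge_lintegral_eq
  obtain ⟨g₄, m₄, hg₄, e₄⟩ := hf₄.exists_measurable_ge_lintegral_eq
  rw [e₁, e₂, ← e₃, ← e₄]
  exact hμ m₁ m₂ m₃ m₄ fun u w =>
    (mul_le_mul' (hg₁ u) (hg₂ w)).trans ((h u w).trans (mul_le_mul' (hg₃ _) (hg₄ _)))

theorem integral_mul_le {μ : Measure α} (hμ : FourFunctionsProperty μ) {f₁ f₂ f₃ f₄ : α → ℝ}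
    (h₁ : 0 ≤ f₁) (h₂ : 0 ≤ f₂) (h₃ : 0 ≤ f₃) (h₄ : 0 ≤ f₄) (hf₃ : Integrable f₃ μ)
    (hf₄ : Integrable f₄ μ) (h : ∀ u w, f₁ u * f₂ w ≤ f₃ (u ⊓ w) * f₄ (u ⊔ w)) :
    (∫ x, f₁ x ∂μ) * ∫ x, f₂ x ∂μ ≤ (∫ x, f₃ x ∂μ) * ∫ x, f₄ x ∂μ := by
  rw [← ENNReal.ofReal_le_ofReal_iff (mul_nonneg (integral_nonneg h₃) (integral_nonneg h₄)),
    ENNReal.ofReal_mul (integral_nonneg h₁), ENNReal.ofReal_mul (integral_nonneg h₃),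
    ofReal_integral_eq_lintegral_ofReal hf₃ (ae_of_all _ h₃),
    ofReal_integral_eq_lintegral_ofReal hf₄ (ae_of_all _ h₄)]
  refine (mul_le_mul' (ofReal_integral_le_lintegral_ofReal h₁)
    (ofReal_integral_le_lintegral_ofReal h₂)).trans ?_
  refine hμ.lintegral_mul_le hf₃.aemeasurable.ennreal_ofReal hf₄.aemeasurable.ennreal_ofReal
    fun u w => ?_
  rw [← ENNReal.ofReal_mul (h₁ u), ← ENNReal.ofReal_mul (h₃ _)]
  exact ENNReal.ofReal_le_ofReal (h u w)

end FourFunctionsProperty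

theorem inf_sub_inf_sq_add_sup_sub_sup_sq_le (p q r s : ℝ) :
    (p ⊓ q - r ⊓ s) ^ 2 + (p ⊔ q - r ⊔ s) ^ 2 ≤ (p - r) ^ 2 + (q - s) ^ 2 := by
  rcases le_total p q with hpq | hqp <;> rcases le_total r s with hrs | hsr
  · simp [hpq, hrs]
  · simp only [inf_of_le_left hpq, sup_of_le_right hpq, inf_of_le_right hsr, sup_of_le_left hsr]
    nlinarith [mul_nonneg (sub_nonneg.2 hpq) (sub_nonneg.2 hsr)]
  · simp only [inf_of_le_right hqp, sup_of_le_left hqp, inf_of_le_left hrs, sup_of_le_right hrs]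
    nlinarith [mul_nonneg (sub_nonneg.2 hqp) (sub_nonneg.2 hrs)]
  · simp only [inf_of_le_right hqp, sup_of_le_left hqp, inf_of_le_right hsr, sup_of_le_left hsr]
    linarith

theorem sum_inf_sub_inf_sq_add_sum_sup_sub_sup_sq_le {ι : Type*} [Fintype ι] (x y u w : ι → ℝ) :
    ∑ i, (x ⊓ y - u ⊓ w) i ^ 2 + ∑ i, (x ⊔ y - u ⊔ w) i ^ 2
      ≤ ∑ i, (x - u) i ^ 2 + ∑ i, (y - w) i ^ 2 := by
  simp only [← Finset.sum_add_distrib]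
  exact Finset.sum_le_sum fun i _ => inf_sub_inf_sq_add_sup_sub_sup_sq_le (x i) (y i) (u i) (w i)

section Gaussian

variable {ι : Type*} [Fintype ι] {g : (ι → ℝ) → ℝ} {c : ℝ}

theorem gaussian_sub_mul_le (hg : ∀ v, g v = c * exp (-(∑ i, v i ^ 2) / 2)) (x y u w : ι → ℝ) :
    g (x - u) * g (y - w) ≤ g (x ⊓ y - u ⊓ w) * g (x ⊔ y - u ⊔ w) := by
  have hprod : ∀ v v', g v * g v' = c * c * exp (-(∑ i, v i ^ 2 + ∑ i, v' i ^ 2) / 2) := by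
    intro v v'
    rw [hg, hg, neg_add, add_div, exp_add]
    ring
  rw [hprod, hprod]
  refine mul_le_mul_of_nonneg_left (exp_le_exp.2 ?_) (mul_self_nonneg c)
  linarith [sum_inf_sub_inf_sq_add_sum_sup_sub_sup_sq_le x y u w]

theorem continuous_of_gaussian (hg : ∀ v, g v = c * exp (-(∑ i, v i ^ 2) / 2)) : Continuous g := by
  rw [funext hg]
  fun_prop

theorem gaussian_le (hg : ∀ v, g v = c * exp (-(∑ i, v i ^ 2) / 2)) (hc : 0 ≤ c) (v : ι → ℝ) :
    g v ≤ c := by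
  rw [hg]
  refine mul_le_of_le_one_right hc (exp_le_one_iff.2 ?_)
  have : 0 ≤ ∑ i, v i ^ 2 := Finset.sum_nonneg fun i _ => sq_nonneg (v i)
  linarith

end Gaussian

theorem gaussian_convolution_logSupermodular (d : ℕ)
    (f : (Fin d → ℝ) → ℝ) (hfnn : ∀ x, 0 ≤ f x) (hfi : Integrable f)
    (hf : ∀ u w, f u * f w ≤ f (u ⊓ w) * f (u ⊔ w))
    (g : (Fin d → ℝ) → ℝ)
    (hg : ∀ x, g x = (2 * π) ^ (-(d : ℝ) / 2) * Real.exp (-(∑ i, (x i) ^ 2) / 2)) :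
    ∀ x y, (∫ z, f z * g (x - z)) * (∫ z, f z * g (y - z)) ≤
      (∫ z, f z * g (x ⊓ y - z)) * (∫ z, f z * g (x ⊔ y - z)) := by
  intro x y
  have hc : 0 ≤ (2 * π) ^ (-(d : ℝ) / 2) := by positivity
  have hg_nonneg : ∀ v, 0 ≤ g v := fun v => by rw [hg]; positivity
  have hint : ∀ a, Integrable fun z => f z * g (a - z) := fun a =>
    hfi.mul_bdd ((continuous_of_gaussian hg).comp (continuous_sub_left a)).aestronglyMeasurable
      (ae_of_all _ fun z => by
        rw [norm_of_nonneg (hg_nonneg _)]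
        exact gaussian_le hg hc _)
  have hnonneg : ∀ a, 0 ≤ fun z => f z * g (a - z) := fun a z =>
    mul_nonneg (hfnn z) (hg_nonneg _)
  refine ((FourFunctionsProperty.of_linearOrder volume).pi d).integral_mul_le (hnonneg x)
    (hnonneg y) (hnonneg _) (hnonneg _) (hint _) (hint _) fun u w => ?_
  calc f u * g (x - u) * (f w * g (y - w)) = f u * f w * (g (x - u) * g (y - w)) := by ring
    _ ≤ f (u ⊓ w) * f (u ⊔ w) * (g (x ⊓ y - u ⊓ w) * g (x ⊔ y - u ⊔ w)) :=
      mul_le_mul (hf u w) (gaussian_sub_mul_le hg x y u w)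
        (mul_nonneg (hg_nonneg _) (hg_nonneg _)) (mul_nonneg (hfnn _) (hfnn _))
    _ = f (u ⊓ w) * g (x ⊓ y - u ⊓ w) * (f (u ⊔ w) * g (x ⊔ y - u ⊔ w)) := by ring
end

section
/- Let f : ℤ^d → [0,∞) be summable and log-supermodular, and g : ℤ^d → [0,∞) be summable of product form g(z) = ∏_i g_i(z_i) with each g_i : ℤ → [0,∞) log-concave (g_i(n)² ≥ g_i(n+1)g_i(n-1) and support an interval of integers). Then the convolution f * g on ℤ^d is log-supermodular. -/
/-!
With `Fₓ z = f z * g (x - z)`, the four functions hypothesis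
`Fₓ a * F_y b ≤ F_{x ⊓ y} (a ⊓ b) * F_{x ⊔ y} (a ⊔ b)` splits into log-supermodularity of `f`
and, coordinatewise, `gᵢ (x - a) * gᵢ (y - b) ≤ gᵢ (x ⊓ y - a ⊓ b) * gᵢ (x ⊔ y - a ⊔ b)`.
The arguments on the right have the same sum as those on the left and lie between them, and a
log-concave sequence with interval support satisfies `gᵢ u * gᵢ v ≤ gᵢ u' * gᵢ v'` whenever
`u ≤ u' ≤ v'` and `u + v = u' + v'`. The four functions theorem on finite partial sums, passed
to the limit, gives the inequality for the convolution sums.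
-/

open Finset
open scoped FinsetFamily

section LogConcave

variable {g : ℤ → ℝ}

lemma mul_succ_le_succ_mul_of_logConcave (hnn : ∀ n, 0 ≤ g n)
    (hlc : ∀ n, g (n + 1) * g (n - 1) ≤ g n ^ 2)
    (hsupp : ∀ a b c : ℤ, a ≤ b → b ≤ c → 0 < g a → 0 < g c → 0 < g b) (u : ℤ) :
    ∀ v, u ≤ v → g u * g (v + 1) ≤ g (u + 1) * g v := by
  refine Int.leInduction (le_of_eq (mul_comm _ _)) fun v huv ih => ?_
  rcases (hnn u).eq_or_lt with hu | hu
  · rw [← hu, zero_mul]; exact mul_nonneg (hnn _) (hnn _)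
  rcases (hnn (v + 1 + 1)).eq_or_lt with hw | hw
  · rw [← hw, mul_zero]; exact mul_nonneg (hnn _) (hnn _)
  have hv : 0 < g v := hsupp u v (v + 1 + 1) huv (by omega) hu hw
  have hv' : 0 < g (v + 1) := hsupp u (v + 1) (v + 1 + 1) (by omega) (by omega) hu hw
  have hlc' : g (v + 1 + 1) * g v ≤ g (v + 1) ^ 2 := by simpa using hlc (v + 1)
  -- multiply the induction hypothesis by `hlc'`, then cancel the positive `g v * g (v + 1)`
  refine le_of_mul_le_mul_right ?_ (mul_pos hv hv')
  calc g u * g (v + 1 + 1) * (g v * g (v + 1))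
      = g u * g (v + 1) * (g (v + 1 + 1) * g v) := by ring
    _ ≤ g (u + 1) * g v * g (v + 1) ^ 2 :=
        mul_le_mul ih hlc' (mul_nonneg (hnn _) (hnn _)) (mul_nonneg (hnn _) (hnn _))
    _ = g (u + 1) * g (v + 1) * (g v * g (v + 1)) := by ring

lemma mul_le_mul_of_logConcave (hnn : ∀ n, 0 ≤ g n)
    (hlc : ∀ n, g (n + 1) * g (n - 1) ≤ g n ^ 2)
    (hsupp : ∀ a b c : ℤ, a ≤ b → b ≤ c → 0 < g a → 0 < g c → 0 < g b)
    {u v u' v' : ℤ} (hu : u ≤ u') (huv : u' ≤ v') (hsum : u + v = u' + v') :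
    g u * g v ≤ g u' * g v' := by
  induction u', hu using Int.leInduction generalizing v' with
  | base =>
    obtain rfl : v = v' := by omega
    rfl
  | succ w _ ih =>
    calc g u * g v ≤ g w * g (v' + 1) := ih (by omega) (by omega)
      _ ≤ g (w + 1) * g v' := mul_succ_le_succ_mul_of_logConcave hnn hlc hsupp w v' (by omega)

lemma mul_le_mul_of_logConcave_of_min_le (hnn : ∀ n, 0 ≤ g n)
    (hlc : ∀ n, g (n + 1) * g (n - 1) ≤ g n ^ 2)
    (hsupp : ∀ a b c : ℤ, a ≤ b → b ≤ c → 0 < g a → 0 < g c → 0 < g b)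
    {p q r s : ℤ} (hmin : min p q ≤ min r s) (hsum : p + q = r + s) :
    g p * g q ≤ g r * g s := by
  wlog hpq : p ≤ q generalizing p q
  · rw [mul_comm]; exact this (by omega) (by omega) (by omega)
  wlog hrs : r ≤ s generalizing r s
  · rw [mul_comm (g r)]; exact this (by omega) (by omega) (by omega)
  exact mul_le_mul_of_logConcave hnn hlc hsupp (by omega) hrs hsum

end LogConcave

lemma prod_logConcave_mul_le_inf_sup {ι : Type*} [Fintype ι] {g : (ι → ℤ) → ℝ}
    {gi : ι → ℤ → ℝ} (hnn : ∀ i n, 0 ≤ gi i n)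
    (hlc : ∀ i n, gi i (n + 1) * gi i (n - 1) ≤ gi i n ^ 2)
    (hsupp : ∀ i, ∀ a b c : ℤ, a ≤ b → b ≤ c → 0 < gi i a → 0 < gi i c → 0 < gi i b)
    (hg : ∀ z, g z = ∏ i, gi i (z i)) (x y a b : ι → ℤ) :
    g (x - a) * g (y - b) ≤ g (x ⊓ y - a ⊓ b) * g (x ⊔ y - a ⊔ b) := by
  simp only [hg, ← prod_mul_distrib]
  refine prod_le_prod (fun i _ => mul_nonneg (hnn i _) (hnn i _)) fun i _ => ?_
  simp only [Pi.sub_apply, Pi.inf_apply, Pi.sup_apply]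
  exact mul_le_mul_of_logConcave_of_min_le (hnn i) (hlc i) (hsupp i) (by omega) (by omega)

lemma summable_mul_comp_sub {α : Type*} [AddGroup α] {f g : α → ℝ} (hf : Summable f)
    (hfnn : ∀ z, 0 ≤ f z) (hg : Summable g) (hgnn : ∀ z, 0 ≤ g z) (v : α) :
    Summable fun z => f z * g (v - z) :=
  (hf.mul_right (∑' z, g z)).of_nonneg_of_le (fun z => mul_nonneg (hfnn z) (hgnn _))
    fun z => mul_le_mul_of_nonneg_left (hg.le_tsum _ fun w _ => hgnn w) (hfnn z)

theorem four_functions_theorem_tsum {α : Type*} [DistribLattice α] {f₁ f₂ f₃ f₄ : α → ℝ}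
    (h₁ : 0 ≤ f₁) (h₂ : 0 ≤ f₂) (h₃ : 0 ≤ f₃) (h₄ : 0 ≤ f₄) (hs₃ : Summable f₃)
    (hs₄ : Summable f₄) (h : ∀ a b, f₁ a * f₂ b ≤ f₃ (a ⊓ b) * f₄ (a ⊔ b)) :
    (∑' a, f₁ a) * ∑' a, f₂ a ≤ (∑' a, f₃ a) * ∑' a, f₄ a := by
  classical
  have hrhs : 0 ≤ (∑' a, f₃ a) * ∑' a, f₄ a := mul_nonneg (tsum_nonneg h₃) (tsum_nonneg h₄)
  by_cases hs₁ : Summable f₁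
  swap
  · rwa [tsum_eq_zero_of_not_summable hs₁, zero_mul]
  by_cases hs₂ : Summable f₂
  swap
  · rwa [tsum_eq_zero_of_not_summable hs₂, mul_zero]
  refine le_of_tendsto (Filter.Tendsto.mul hs₁.hasSum hs₂.hasSum)
    (Filter.Eventually.of_forall fun s => ?_)
  calc (∑ a ∈ s, f₁ a) * ∑ a ∈ s, f₂ a ≤ (∑ a ∈ s ⊼ s, f₃ a) * ∑ a ∈ s ⊻ s, f₄ a :=
        four_functions_theorem f₁ f₂ f₃ f₄ h₁ h₂ h₃ h₄ h s s
    _ ≤ (∑' a, f₃ a) * ∑' a, f₄ a :=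
        mul_le_mul (hs₃.sum_le_tsum _ fun a _ => h₃ a) (hs₄.sum_le_tsum _ fun a _ => h₄ a)
          (sum_nonneg fun a _ => h₄ a) (tsum_nonneg h₃)

theorem int_convolution_logConcave_product_logSupermodular (d : ℕ)
    (f g : (Fin d → ℤ) → ℝ) (gi : Fin d → ℤ → ℝ)
    (hfnn : ∀ x, 0 ≤ f x) (hginn : ∀ i n, 0 ≤ gi i n)
    (hfs : Summable f) (hgs : Summable g)
    (hf : ∀ x y, f x * f y ≤ f (x ⊓ y) * f (x ⊔ y))
    (hlc : ∀ i n, gi i (n + 1) * gi i (n - 1) ≤ gi i n ^ 2)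
    (hsupp : ∀ i, ∀ a b c : ℤ, a ≤ b → b ≤ c → 0 < gi i a → 0 < gi i c → 0 < gi i b)
    (hg : ∀ z, g z = ∏ i, gi i (z i)) :
    ∀ x y, (∑' z, f z * g (x - z)) * (∑' z, f z * g (y - z)) ≤
      (∑' z, f z * g (x ⊓ y - z)) * (∑' z, f z * g (x ⊔ y - z)) := by
  intro x y
  have hgnn (z) : 0 ≤ g z := (hg z) ▸ prod_nonneg fun i _ => hginn i _
  have hnn (v : Fin d → ℤ) : 0 ≤ fun z => f z * g (v - z) :=
    fun z => mul_nonneg (hfnn z) (hgnn _)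
  refine four_functions_theorem_tsum (hnn x) (hnn y) (hnn _) (hnn _)
    (summable_mul_comp_sub hfs hfnn hgs hgnn _) (summable_mul_comp_sub hfs hfnn hgs hgnn _)
    fun a b => ?_
  calc f a * g (x - a) * (f b * g (y - b)) = f a * f b * (g (x - a) * g (y - b)) := by ring
    _ ≤ f (a ⊓ b) * f (a ⊔ b) * (g (x ⊓ y - a ⊓ b) * g (x ⊔ y - a ⊔ b)) :=
        mul_le_mul (hf a b) (prod_logConcave_mul_le_inf_sup hginn hlc hsupp hg x y a b)
          (mul_nonneg (hgnn _) (hgnn _)) (mul_nonneg (hfnn _) (hfnn _))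
    _ = f (a ⊓ b) * g (x ⊓ y - a ⊓ b) * (f (a ⊔ b) * g (x ⊔ y - a ⊔ b)) := by ring
end

section
/- Let ν₁, ν₂ be probability measures on ℝ with continuous strictly positive densities n₁, n₂, let T = F₂⁻¹ ∘ F₁ be the monotone transport map pushing ν₁ to ν₂, where F_i are the cumulative distribution functions, and let A = {x : x ≤ T(x)}. Then T(A) = A and T(Aᶜ) = Aᶜ. -/
open MeasureTheory

private theorem cdf_aux (n : ℝ → ℝ) (hc : Continuous n) (hp : ∀ x, 0 < n x)
    (hint : ∫ x, n x = 1) (F : ℝ → ℝ) (hF : ∀ x, F x = ∫ t in Set.Iio x, n t) :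
    StrictMono F ∧ (∀ c, 0 < c → c < 1 → ∃ x, F x = c) ∧ (∀ x, 0 < F x ∧ F x < 1) := by
  have hInt : Integrable n := by
    by_contra h
    rw [MeasureTheory.integral_undef h] at hint
    norm_num at hint
  -- F y = F x + ∫ x..y
  have hdiff : ∀ x y : ℝ, x ≤ y → F y = F x + ∫ t in x..y, n t := by
    intro x y hxy
    rw [hF, hF, ← Set.Iio_union_Ico_eq_Iio hxy,
      setIntegral_union ((Set.Iio_disjoint_Ici le_rfl).mono_right Set.Ico_subset_Ici_self)
        measurableSet_Ico hInt.integrableOn hInt.integrableOn,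
      integral_Ico_eq_integral_Ioo, ← integral_Ioc_eq_integral_Ioo,
      ← intervalIntegral.integral_of_le hxy]
  have hmono : StrictMono F := by
    intro x y hxy
    rw [hdiff x y hxy.le]
    have : 0 < ∫ t in x..y, n t :=
      intervalIntegral.intervalIntegral_pos_of_pos (hInt.intervalIntegrable) hp hxy
    linarith
  have hcompl : ∀ x, F x + ∫ t in Set.Ici x, n t = 1 := by
    intro x
    rw [hF, ← setIntegral_union (Set.Iio_disjoint_Ici le_rfl) measurableSet_Ici
      hInt.integrableOn hInt.integrableOn, Set.Iio_union_Ici, setIntegral_univ, hint]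
  have hpos : ∀ x, 0 < F x := by
    intro x
    have h1 : F x = F (x - 1) + ∫ t in (x-1)..x, n t := hdiff _ _ (by linarith)
    have h2 : 0 ≤ F (x - 1) := by
      rw [hF]; exact setIntegral_nonneg measurableSet_Iio fun t _ => (hp t).le
    have h3 : 0 < ∫ t in (x-1)..x, n t :=
      intervalIntegral.intervalIntegral_pos_of_pos (hInt.intervalIntegrable) hp (by linarith)
    linarith
  have hlt1 : ∀ x, F x < 1 := by
    intro x
    have h3 : 0 < ∫ t in x..(x+1), n t :=
      intervalIntegral.intervalIntegral_pos_of_pos (hInt.intervalIntegrable) hp (by linarith)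
    have h4 : (∫ t in x..(x+1), n t) ≤ ∫ t in Set.Ici x, n t := by
      rw [intervalIntegral.integral_of_le (by linarith)]
      exact setIntegral_mono_set hInt.integrableOn
        (Filter.Eventually.of_forall fun t => (hp t).le)
        (Filter.Eventually.of_forall fun t ht => ht.1.le)
    have := hcompl x
    linarith
  refine ⟨hmono, ?_, fun x => ⟨hpos x, hlt1 x⟩⟩
  intro c hc0 hc1
  -- continuity of F
  have hcont : Continuous F := by
    have : ∀ x, F x = F 0 + ∫ t in (0:ℝ)..x, n t := by
      intro x
      rcases le_total (0:ℝ) x with h | h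
      · exact hdiff 0 x h
      · have h1 := hdiff x 0 h
        have h2 : (∫ t in (0:ℝ)..x, n t) = -∫ t in x..(0:ℝ), n t :=
          intervalIntegral.integral_symm x 0
        linarith
    have : F = fun x => F 0 + ∫ t in (0:ℝ)..x, n t := funext this
    rw [this]
    exact continuous_const.add (hInt.continuous_primitive 0)
  -- ∃ b, c < F b
  have hunion : (⋃ N : ℕ, Set.Iio (N : ℝ)) = Set.univ := by
    rw [Set.eq_univ_iff_forall]
    intro x
    obtain ⟨N, hN⟩ := exists_nat_gt x
    exact Set.mem_iUnion.2 ⟨N, hN⟩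
  have htend : Filter.Tendsto (fun N : ℕ => F (N : ℝ)) Filter.atTop (nhds 1) := by
    have h := tendsto_setIntegral_of_monotone (μ := volume) (f := n)
      (s := fun N : ℕ => Set.Iio (N : ℝ)) (fun N => measurableSet_Iio)
      (fun i j hij => Set.Iio_subset_Iio (by exact_mod_cast hij))
      (by rw [hunion]; exact hInt.integrableOn)
    rw [hunion, setIntegral_univ, hint] at h
    simpa only [hF] using h
  obtain ⟨b, hb⟩ := (htend.eventually_const_lt hc1).exists
  -- ∃ a, F a < c
  have hunion2 : (⋃ N : ℕ, Set.Ici (-(N : ℝ))) = Set.univ := by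
    rw [Set.eq_univ_iff_forall]
    intro x
    obtain ⟨N, hN⟩ := exists_nat_gt (-x)
    exact Set.mem_iUnion.2 ⟨N, by simp only [Set.mem_Ici]; linarith⟩
  have htend2 : Filter.Tendsto (fun N : ℕ => ∫ t in Set.Ici (-(N:ℝ)), n t)
      Filter.atTop (nhds 1) := by
    have h := tendsto_setIntegral_of_monotone (μ := volume) (f := n)
      (s := fun N : ℕ => Set.Ici (-(N : ℝ))) (fun N => measurableSet_Ici)
      (fun i j hij => Set.Ici_subset_Ici.2 (neg_le_neg (Nat.cast_le.2 hij)))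
      (by rw [hunion2]; exact hInt.integrableOn)
    rwa [hunion2, setIntegral_univ, hint] at h
  obtain ⟨a, ha⟩ := (htend2.eventually_const_lt (show (1:ℝ) - c < 1 by linarith)).exists
  have ha' : F (-(a:ℝ)) < c := by
    have := hcompl (-(a:ℝ))
    linarith
  -- IVT
  have : c ∈ Set.Icc (F (-(a:ℝ))) (F (b:ℝ)) := ⟨ha'.le, hb.le⟩
  obtain ⟨x, hx⟩ := intermediate_value_univ (-(a:ℝ)) (b:ℝ) hcont this
  exact ⟨x, hx⟩

theorem transport_preserves_A (n₁ n₂ : ℝ → ℝ)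
    (hc₁ : Continuous n₁) (hc₂ : Continuous n₂)
    (hp₁ : ∀ x, 0 < n₁ x) (hp₂ : ∀ x, 0 < n₂ x)
    (hint₁ : ∫ x, n₁ x = 1) (hint₂ : ∫ x, n₂ x = 1)
    (F₁ F₂ : ℝ → ℝ)
    (hF₁ : ∀ x, F₁ x = ∫ t in Set.Iio x, n₁ t)
    (hF₂ : ∀ x, F₂ x = ∫ t in Set.Iio x, n₂ t)
    (T : ℝ → ℝ) (hT : ∀ x, F₂ (T x) = F₁ x) :
    T '' {x : ℝ | x ≤ T x} = {x : ℝ | x ≤ T x} ∧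
    T '' {x : ℝ | x ≤ T x}ᶜ = {x : ℝ | x ≤ T x}ᶜ := by
  obtain ⟨hm₁, hs₁, hb₁⟩ := cdf_aux n₁ hc₁ hp₁ hint₁ F₁ hF₁
  obtain ⟨hm₂, hs₂, hb₂⟩ := cdf_aux n₂ hc₂ hp₂ hint₂ F₂ hF₂
  have hTmono : StrictMono T := by
    intro x y hxy
    have : F₂ (T x) < F₂ (T y) := by rw [hT, hT]; exact hm₁ hxy
    exact (hm₂.lt_iff_lt).1 this
  have hTsurj : Function.Surjective T := by
    intro z
    obtain ⟨hz0, hz1⟩ := hb₂ z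
    obtain ⟨x, hx⟩ := hs₁ (F₂ z) hz0 hz1
    refine ⟨x, hm₂.injective ?_⟩
    rw [hT, hx]
  constructor
  · ext z
    simp only [Set.mem_image, Set.mem_setOf_eq]
    constructor
    · rintro ⟨x, hx, rfl⟩
      exact (hTmono.le_iff_le).2 hx
    · intro hz
      obtain ⟨x, rfl⟩ := hTsurj z
      refine ⟨x, ?_, rfl⟩
      by_contra h
      push_neg at h
      exact absurd hz (not_le.2 (hTmono h))
  · ext z
    simp only [Set.mem_image, Set.mem_compl_iff, Set.mem_setOf_eq, not_le]
    constructor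
    · rintro ⟨x, hx, rfl⟩
      exact hTmono hx
    · intro hz
      obtain ⟨x, rfl⟩ := hTsurj z
      refine ⟨x, ?_, rfl⟩
      by_contra h
      push_neg at h
      exact absurd ((hTmono.le_iff_le).2 h) (not_le.2 hz)
end

section
/- Let ν₁, ν₂ be probability measures on ℝ with strictly positive densities n₁, n₂, let T be the monotone transport map with T # ν₁ = ν₂, and π the coupling π = (id, T) # ν₁. Define ν₋ = (min) # π and ν₊ = (max) # π, i.e., the laws of min(X, T(X)) and max(X, T(X)) for X ~ ν₁. Then ν₋ has density n₋ = n₁·𝟙_A + n₂·𝟙_{Aᶜ} and ν₊ has density n₊ = n₁·𝟙_{Aᶜ} + n₂·𝟙_A, where A = {x : x ≤ T(x)}. -/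
open MeasureTheory

theorem minmax_pushforward_densities (n₁ n₂ : ℝ → ℝ)
    (hp₁ : ∀ x, 0 < n₁ x) (hp₂ : ∀ x, 0 < n₂ x)
    (hm₁ : Measurable n₁) (hm₂ : Measurable n₂)
    (ν₁ ν₂ : Measure ℝ) [IsProbabilityMeasure ν₁] [IsProbabilityMeasure ν₂]
    (hν₁ : ν₁ = volume.withDensity (fun x => ENNReal.ofReal (n₁ x)))
    (hν₂ : ν₂ = volume.withDensity (fun x => ENNReal.ofReal (n₂ x)))
    (T : ℝ → ℝ) (hTmono : StrictMono T) (hTmeas : Measurable T)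
    (hpush : Measure.map T ν₁ = ν₂) :
    Measure.map (fun x => min x (T x)) ν₁ =
      volume.withDensity (fun x => ENNReal.ofReal (if x ≤ T x then n₁ x else n₂ x)) ∧
    Measure.map (fun x => max x (T x)) ν₁ =
      volume.withDensity (fun x => ENNReal.ofReal (if x ≤ T x then n₂ x else n₁ x)) := by
  set A : Set ℝ := {x | x ≤ T x} with hAdef
  have hA : MeasurableSet A := measurableSet_le measurable_id hTmeas
  have hmem : ∀ x, x ∈ A ↔ T x ∈ A := by
    intro x
    constructor
    · intro h; exact hTmono.monotone h
    · intro h; exact hTmono.le_iff_le.mp h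
  -- RHS for min
  have hd₁ : (fun x => ENNReal.ofReal (if x ≤ T x then n₁ x else n₂ x)) =
      (A.indicator (fun x => ENNReal.ofReal (n₁ x)) +
       Aᶜ.indicator (fun x => ENNReal.ofReal (n₂ x))) := by
    funext x
    by_cases h : x ≤ T x
    · simp [Set.indicator, hAdef, h]
    · simp [Set.indicator, hAdef, h]
  have hd₂ : (fun x => ENNReal.ofReal (if x ≤ T x then n₂ x else n₁ x)) =
      (A.indicator (fun x => ENNReal.ofReal (n₂ x)) +
       Aᶜ.indicator (fun x => ENNReal.ofReal (n₁ x))) := by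
    funext x
    by_cases h : x ≤ T x
    · simp [Set.indicator, hAdef, h]
    · simp [Set.indicator, hAdef, h]
  have hR₁ : volume.withDensity (fun x => ENNReal.ofReal (if x ≤ T x then n₁ x else n₂ x)) =
      ν₁.restrict A + ν₂.restrict Aᶜ := by
    rw [hd₁, withDensity_add_left ((hm₁.ennreal_ofReal).indicator hA),
      withDensity_indicator hA, withDensity_indicator hA.compl, hν₁, hν₂,
      ← restrict_withDensity hA, ← restrict_withDensity hA.compl]
  have hR₂ : volume.withDensity (fun x => ENNReal.ofReal (if x ≤ T x then n₂ x else n₁ x)) =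
      ν₂.restrict A + ν₁.restrict Aᶜ := by
    rw [hd₂, withDensity_add_left ((hm₂.ennreal_ofReal).indicator hA),
      withDensity_indicator hA, withDensity_indicator hA.compl, hν₁, hν₂,
      ← restrict_withDensity hA, ← restrict_withDensity hA.compl]
  have hTpre : ∀ s : Set ℝ, MeasurableSet s → ν₁ (T ⁻¹' s) = ν₂ s := by
    intro s hs
    rw [← hpush, Measure.map_apply hTmeas hs]
  have hminmeas : Measurable fun x : ℝ => min x (T x) := measurable_id'.min hTmeas
  have hmaxmeas : Measurable fun x : ℝ => max x (T x) := measurable_id'.max hTmeas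
  constructor
  · rw [hR₁]
    ext s hs
    rw [Measure.map_apply hminmeas hs]
    have hset : (fun x => min x (T x)) ⁻¹' s = (s ∩ A) ∪ T ⁻¹' (s ∩ Aᶜ) := by
      ext x
      by_cases h : x ≤ T x
      · have hTA : T x ∈ A := (hmem x).mp h
        simp [Set.mem_preimage, min_eq_left h, h, hAdef, hTA.out]
      · have hTA : T x ∉ A := fun hc => h ((hmem x).mpr hc)
        simp only [Set.mem_preimage, Set.mem_union, Set.mem_inter_iff, Set.mem_compl_iff,
          min_eq_right (le_of_not_ge h)]
        constructor
        · intro hx; exact Or.inr ⟨hx, hTA⟩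
        · rintro (⟨hx, hxA⟩ | ⟨hx, _⟩)
          · exact absurd hxA (fun hc => h hc)
          · exact hx
    rw [hset]
    have hdisj : Disjoint (s ∩ A) (T ⁻¹' (s ∩ Aᶜ)) := by
      rw [Set.disjoint_left]
      rintro x ⟨_, hxA⟩ hxT
      exact hxT.2 ((hmem x).mp hxA)
    rw [measure_union hdisj (hTmeas (hs.inter hA.compl)),
      hTpre _ (hs.inter hA.compl),
      Measure.add_apply, Measure.restrict_apply hs, Measure.restrict_apply hs]
  · rw [hR₂]
    ext s hs
    rw [Measure.map_apply hmaxmeas hs]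
    have hset : (fun x => max x (T x)) ⁻¹' s = (s ∩ Aᶜ) ∪ T ⁻¹' (s ∩ A) := by
      ext x
      by_cases h : x ≤ T x
      · have hTA : T x ∈ A := (hmem x).mp h
        simp only [Set.mem_preimage, Set.mem_union, Set.mem_inter_iff, Set.mem_compl_iff,
          max_eq_right h]
        constructor
        · intro hx; exact Or.inr ⟨hx, hTA⟩
        · rintro (⟨hx, hxA⟩ | ⟨hx, _⟩)
          · exact absurd h hxA
          · exact hx
      · have hTA : T x ∉ A := fun hc => h ((hmem x).mpr hc)
        simp only [Set.mem_preimage, Set.mem_union, Set.mem_inter_iff, Set.mem_compl_iff,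
          max_eq_left (le_of_not_ge h)]
        constructor
        · intro hx; exact Or.inl ⟨hx, h⟩
        · rintro (⟨hx, _⟩ | ⟨hx, hxA⟩)
          · exact hx
          · exact absurd ((hmem x).mpr hxA) h
    rw [hset]
    have hdisj : Disjoint (s ∩ Aᶜ) (T ⁻¹' (s ∩ A)) := by
      rw [Set.disjoint_left]
      rintro x ⟨_, hxA⟩ hxT
      exact hxA ((hmem x).mpr hxT.2)
    rw [measure_union hdisj (hTmeas (hs.inter hA)),
      hTpre _ (hs.inter hA),
      Measure.add_apply, Measure.restrict_apply hs, Measure.restrict_apply hs]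
    ring
end

section
/- (Displacement convexity of entropy under min/max pushforwards) With ν₁, ν₂ probability measures on ℝ with strictly positive densities, T the monotone transport map from ν₁ to ν₂, π = (id,T)#ν₁, ν₋ = min#π and ν₊ = max#π: H(ν₋|λ) + H(ν₊|λ) ≤ H(ν₁|λ) + H(ν₂|λ), where H(ν|λ) = ∫ n log n dλ for ν with density n relative to Lebesgue measure λ. -/
open MeasureTheory Real

theorem displacement_convexity_entropy_minmax (n₁ n₂ nm np : ℝ → ℝ)
    (hp₁ : ∀ x, 0 < n₁ x) (hp₂ : ∀ x, 0 < n₂ x)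
    (hnm : ∀ x, 0 ≤ nm x) (hnp : ∀ x, 0 ≤ np x)
    (hm₁ : Measurable n₁) (hm₂ : Measurable n₂) (hmm : Measurable nm) (hmp : Measurable np)
    (ν₁ ν₂ : Measure ℝ) [IsProbabilityMeasure ν₁] [IsProbabilityMeasure ν₂]
    (hν₁ : ν₁ = volume.withDensity (fun x => ENNReal.ofReal (n₁ x)))
    (hν₂ : ν₂ = volume.withDensity (fun x => ENNReal.ofReal (n₂ x)))
    (T : ℝ → ℝ) (hTmono : StrictMono T) (hTmeas : Measurable T)
    (hpush : Measure.map T ν₁ = ν₂)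
    (hνm : Measure.map (fun x => min x (T x)) ν₁ =
      volume.withDensity (fun x => ENNReal.ofReal (nm x)))
    (hνp : Measure.map (fun x => max x (T x)) ν₁ =
      volume.withDensity (fun x => ENNReal.ofReal (np x)))
    (hi₁ : Integrable (fun x => n₁ x * log (n₁ x)))
    (hi₂ : Integrable (fun x => n₂ x * log (n₂ x)))
    (him : Integrable (fun x => nm x * log (nm x)))
    (hip : Integrable (fun x => np x * log (np x))) :
    (∫ x, nm x * log (nm x)) + (∫ x, np x * log (np x)) ≤
      (∫ x, n₁ x * log (n₁ x)) + (∫ x, n₂ x * log (n₂ x)) := by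
  -- The set where T x ≥ x
  set A : Set ℝ := {x | x ≤ T x} with hA
  have hAmeas : MeasurableSet A := measurableSet_le measurable_id hTmeas
  -- A is invariant: A = T ⁻¹' A
  have hApre : T ⁻¹' A = A := by
    ext x
    simp only [Set.mem_preimage, hA, Set.mem_setOf_eq]
    exact hTmono.le_iff_le
  -- the map T sends ν₁.restrict Aᶜ to ν₂.restrict Aᶜ  (and same for A)
  have hmapT : ∀ S : Set ℝ, MeasurableSet S →
      Measure.map T (ν₁.restrict S) = ν₂.restrict S ∨ True := fun _ _ => Or.inr trivial
  have hmapTA : ∀ (S : Set ℝ), MeasurableSet S → T ⁻¹' S = S →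
      Measure.map T (ν₁.restrict S) = ν₂.restrict S := by
    intro S hS hpre
    ext u hu
    rw [Measure.map_apply hTmeas hu, Measure.restrict_apply (hTmeas hu),
      Measure.restrict_apply hu]
    conv_lhs => rw [← hpre]
    rw [← Set.preimage_inter,
      ← Measure.map_apply hTmeas (hu.inter hS), hpush]
  have hAcpre : T ⁻¹' Aᶜ = Aᶜ := by rw [Set.preimage_compl, hApre]
  have hAcmeas : MeasurableSet Aᶜ := hAmeas.compl
  -- decompose the min-pushforward
  have hsplit : ν₁ = ν₁.restrict A + ν₁.restrict Aᶜ :=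
    (Measure.restrict_add_restrict_compl hAmeas).symm
  have hminA : Measure.map (fun x => min x (T x)) (ν₁.restrict A) = ν₁.restrict A := by
    rw [Measure.map_congr (g := id) ?_, Measure.map_id]
    filter_upwards [ae_restrict_mem hAmeas] with x hx
    exact min_eq_left hx
  have hminAc : Measure.map (fun x => min x (T x)) (ν₁.restrict Aᶜ) = ν₂.restrict Aᶜ := by
    rw [Measure.map_congr (g := T) ?_, hmapTA Aᶜ hAcmeas hAcpre]
    filter_upwards [ae_restrict_mem hAcmeas] with x hx
    exact min_eq_right (le_of_lt (not_le.mp hx))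
  have hmaxA : Measure.map (fun x => max x (T x)) (ν₁.restrict A) = ν₂.restrict A := by
    rw [Measure.map_congr (g := T) ?_, hmapTA A hAmeas hApre]
    filter_upwards [ae_restrict_mem hAmeas] with x hx
    exact max_eq_right hx
  have hmaxAc : Measure.map (fun x => max x (T x)) (ν₁.restrict Aᶜ) = ν₁.restrict Aᶜ := by
    rw [Measure.map_congr (g := id) ?_, Measure.map_id]
    filter_upwards [ae_restrict_mem hAcmeas] with x hx
    exact max_eq_left (le_of_lt (not_le.mp hx))
  have hminmeas : Measurable fun x : ℝ => min x (T x) := measurable_id.min hTmeas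
  have hmaxmeas : Measurable fun x : ℝ => max x (T x) := measurable_id.max hTmeas
  have hmin : Measure.map (fun x => min x (T x)) ν₁ = ν₁.restrict A + ν₂.restrict Aᶜ := by
    conv_lhs => rw [hsplit]
    rw [Measure.map_add _ _ hminmeas, hminA, hminAc]
  have hmax : Measure.map (fun x => max x (T x)) ν₁ = ν₂.restrict A + ν₁.restrict Aᶜ := by
    conv_lhs => rw [hsplit]
    rw [Measure.map_add _ _ hmaxmeas, hmaxA, hmaxAc]
  -- identify the densities
  have hdens : ∀ (f g : ℝ → ℝ), Measurable f → Measurable g →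
      (volume.withDensity fun x => ENNReal.ofReal (f x)).restrict A
        + (volume.withDensity fun x => ENNReal.ofReal (g x)).restrict Aᶜ
      = volume.withDensity (fun x =>
          ENNReal.ofReal (A.piecewise f g x)) := by
    intro f g hf hg
    rw [restrict_withDensity hAmeas, restrict_withDensity hAcmeas,
      ← withDensity_indicator hAmeas, ← withDensity_indicator hAcmeas,
      ← withDensity_add_left (hf.ennreal_ofReal.indicator hAmeas)]
    congr 1
    ext x
    by_cases hx : x ∈ A <;>
      simp [Set.indicator, Set.piecewise, hx]
  have hmeq : (fun x => ENNReal.ofReal (nm x)) =ᵐ[volume]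
      (fun x => ENNReal.ofReal (A.piecewise n₁ n₂ x)) := by
    rw [← withDensity_eq_iff_of_sigmaFinite hmm.ennreal_ofReal.aemeasurable
      (hm₁.piecewise hAmeas hm₂).ennreal_ofReal.aemeasurable]
    rw [← hνm, hmin, hν₁, hν₂, hdens n₁ n₂ hm₁ hm₂]
  have hpeq : (fun x => ENNReal.ofReal (np x)) =ᵐ[volume]
      (fun x => ENNReal.ofReal (A.piecewise n₂ n₁ x)) := by
    rw [← withDensity_eq_iff_of_sigmaFinite hmp.ennreal_ofReal.aemeasurable
      (hm₂.piecewise hAmeas hm₁).ennreal_ofReal.aemeasurable]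
    rw [← hνp, hmax, hν₁, hν₂, hdens n₂ n₁ hm₂ hm₁]
  -- turn into real-valued a.e. equalities
  have hmeq' : (fun x => nm x) =ᵐ[volume] A.piecewise n₁ n₂ := by
    filter_upwards [hmeq] with x hx
    have hpw : 0 ≤ A.piecewise n₁ n₂ x := by
      by_cases h : x ∈ A <;> simp [Set.piecewise, h, (hp₁ x).le, (hp₂ x).le]
    exact (ENNReal.ofReal_eq_ofReal_iff (hnm x) hpw).mp hx
  have hpeq' : (fun x => np x) =ᵐ[volume] A.piecewise n₂ n₁ := by
    filter_upwards [hpeq] with x hx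
    have hpw : 0 ≤ A.piecewise n₂ n₁ x := by
      by_cases h : x ∈ A <;> simp [Set.piecewise, h, (hp₁ x).le, (hp₂ x).le]
    exact (ENNReal.ofReal_eq_ofReal_iff (hnp x) hpw).mp hx
  -- conclude: the two integrands agree a.e. after summing
  have key : (∫ x, nm x * log (nm x)) + (∫ x, np x * log (np x)) =
      (∫ x, n₁ x * log (n₁ x)) + (∫ x, n₂ x * log (n₂ x)) := by
    rw [← integral_add him hip, ← integral_add hi₁ hi₂]
    apply integral_congr_ae
    filter_upwards [hmeq', hpeq'] with x hxm hxp
    by_cases h : x ∈ A <;>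
      simp only [hxm, hxp, Set.piecewise, h, if_true, if_false] <;> ring
  exact le_of_eq key
end

section
/- Let α ∈ (0,1], s ∈ (0,1), and let T : (0,∞) → (0,∞) be differentiable and increasing. Define H(x) = (s x^α + (1-s) T(x)^α)^{1/α}. Then H'(x) ≥ T'(x)^{1-s} for all x > 0. -/
theorem power_mean_deriv_bound (α s : ℝ) (hα : α ∈ Set.Ioc (0:ℝ) 1)
    (hs : s ∈ Set.Ioo (0:ℝ) 1) (T : ℝ → ℝ)
    (hTpos : ∀ x > 0, 0 < T x)
    (hTdiff : ∀ x > 0, DifferentiableAt ℝ T x)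
    (hT' : ∀ x > 0, 0 < deriv T x)
    (H : ℝ → ℝ)
    (hH : ∀ x, H x = (s * x ^ α + (1 - s) * T x ^ α) ^ (1 / α)) :
    ∀ x > 0, deriv T x ^ (1 - s) ≤ deriv H x := by
  obtain ⟨hα0, hα1⟩ := hα
  obtain ⟨hs0, hs1⟩ := hs
  intro x hx
  have pT := hTpos x hx
  have pT' := hT' x hx
  have h1s : (0:ℝ) < 1 - s := by linarith
  have hA : 0 < s * x ^ α + (1 - s) * T x ^ α :=
    add_pos (mul_pos hs0 (Real.rpow_pos_of_pos hx α))
      (mul_pos h1s (Real.rpow_pos_of_pos pT α))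
  set A := s * x ^ α + (1 - s) * T x ^ α with hAdef
  -- derivative of H
  have hHfun : H = fun y => (s * y ^ α + (1 - s) * T y ^ α) ^ (1 / α) := funext hH
  have hg : HasDerivAt (fun y => s * y ^ α + (1 - s) * T y ^ α)
      (s * (α * x ^ (α - 1)) + (1 - s) * (deriv T x * α * T x ^ (α - 1))) x := by
    exact ((Real.hasDerivAt_rpow_const (Or.inl hx.ne')).const_mul s).add
      ((((hTdiff x hx).hasDerivAt).rpow_const (Or.inl pT.ne')).const_mul (1 - s))
  have hHder : HasDerivAt H
      ((s * (α * x ^ (α - 1)) + (1 - s) * (deriv T x * α * T x ^ (α - 1))) * (1 / α)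
        * A ^ (1 / α - 1)) x := by
    rw [hHfun]
    exact hg.rpow_const (Or.inl hA.ne')
  have hderiv : deriv H x
      = A ^ (1 / α - 1) * (s * x ^ (α - 1) + (1 - s) * (T x ^ (α - 1) * deriv T x)) := by
    rw [hHder.deriv]
    field_simp
  rw [hderiv]
  -- AM-GM for the sum part
  have amgm2 : (x ^ (α - 1)) ^ s * (T x ^ (α - 1) * deriv T x) ^ (1 - s)
      ≤ s * x ^ (α - 1) + (1 - s) * (T x ^ (α - 1) * deriv T x) :=
    Real.geom_mean_le_arith_mean2_weighted hs0.le h1s.le (Real.rpow_nonneg hx.le _)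
      (mul_nonneg (Real.rpow_nonneg pT.le _) pT'.le) (by ring)
  -- AM-GM for A
  have amgm1 : (x ^ s * T x ^ (1 - s)) ^ α ≤ A := by
    have := Real.geom_mean_le_arith_mean2_weighted hs0.le (by linarith)
      (Real.rpow_nonneg hx.le α) (Real.rpow_nonneg pT.le α) (by ring : s + (1 - s) = 1)
    calc (x ^ s * T x ^ (1 - s)) ^ α = (x ^ α) ^ s * (T x ^ α) ^ (1 - s) := by
          rw [Real.mul_rpow (Real.rpow_nonneg hx.le s) (Real.rpow_nonneg pT.le _),
            ← Real.rpow_mul hx.le, ← Real.rpow_mul hx.le,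
            ← Real.rpow_mul pT.le, ← Real.rpow_mul pT.le, mul_comm s α, mul_comm (1-s) α]
      _ ≤ A := this
  have hG : (0:ℝ) < x ^ s * T x ^ (1 - s) :=
    mul_pos (Real.rpow_pos_of_pos hx s) (Real.rpow_pos_of_pos pT _)
  have h1 : (x ^ s * T x ^ (1 - s)) ^ (1 - α) ≤ A ^ (1 / α - 1) := by
    have hbase : x ^ s * T x ^ (1 - s) ≤ A ^ (1 / α) := by
      have := Real.rpow_le_rpow (Real.rpow_nonneg hG.le α) amgm1 (by positivity : (0:ℝ) ≤ 1 / α)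
      rwa [← Real.rpow_mul hG.le, mul_one_div, div_self hα0.ne', Real.rpow_one] at this
    calc (x ^ s * T x ^ (1 - s)) ^ (1 - α) ≤ (A ^ (1 / α)) ^ (1 - α) :=
          Real.rpow_le_rpow hG.le hbase (by linarith)
      _ = A ^ (1 / α - 1) := by
          rw [← Real.rpow_mul hA.le]
          congr 1
          field_simp
  -- key equality
  have key : (x ^ s * T x ^ (1 - s)) ^ (1 - α)
      * ((x ^ (α - 1)) ^ s * (T x ^ (α - 1) * deriv T x) ^ (1 - s))
      = deriv T x ^ (1 - s) := by
    rw [Real.mul_rpow (Real.rpow_nonneg pT.le _) pT'.le,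
      Real.mul_rpow (Real.rpow_nonneg hx.le s) (Real.rpow_nonneg pT.le _),
      ← Real.rpow_mul hx.le, ← Real.rpow_mul pT.le, ← Real.rpow_mul hx.le,
      ← Real.rpow_mul pT.le]
    calc x ^ (s * (1 - α)) * T x ^ ((1 - s) * (1 - α))
        * (x ^ ((α - 1) * s) * (T x ^ ((α - 1) * (1 - s)) * deriv T x ^ (1 - s)))
        = (x ^ (s * (1 - α)) * x ^ ((α - 1) * s))
          * (T x ^ ((1 - s) * (1 - α)) * T x ^ ((α - 1) * (1 - s))) * deriv T x ^ (1 - s) := by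
          ring
      _ = deriv T x ^ (1 - s) := by
          rw [← Real.rpow_add hx, ← Real.rpow_add pT]
          rw [show s * (1 - α) + (α - 1) * s = 0 by ring,
            show (1 - s) * (1 - α) + (α - 1) * (1 - s) = 0 by ring,
            Real.rpow_zero, Real.rpow_zero]
          ring
  calc deriv T x ^ (1 - s)
      = (x ^ s * T x ^ (1 - s)) ^ (1 - α)
        * ((x ^ (α - 1)) ^ s * (T x ^ (α - 1) * deriv T x) ^ (1 - s)) := key.symm
    _ ≤ A ^ (1 / α - 1) * (s * x ^ (α - 1) + (1 - s) * (T x ^ (α - 1) * deriv T x)) :=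
        mul_le_mul h1 amgm2
          (mul_nonneg (Real.rpow_nonneg (Real.rpow_pos_of_pos hx _).le s)
            (Real.rpow_nonneg (mul_nonneg (Real.rpow_nonneg pT.le _) pT'.le) _))
          (Real.rpow_nonneg hA.le _)
end

section
/- (Duality formula for log-Laplace transform) Let f : ℝ → ℝ ∪ {−∞} be measurable with ∫ e^f dλ ∈ (0,∞), where λ is Lebesgue measure. Then log ∫ e^f dλ = sup over probability measures ν ≪ λ with density n of { ∫ f dν − ∫ n log n dλ }, where the supremum is over ν for which both integrals are well-defined and finite. -/
open MeasureTheory Real Set Filter Topology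

private lemma gibbs_pointwise (a t Z : ℝ) (hZ : 0 < Z) (ht : 0 ≤ t) :
    a * t - t * log t ≤ Real.exp a / Z - t + t * log Z := by
  rcases eq_or_lt_of_le ht with h0 | h0
  · rw [← h0]
    simp
    positivity
  · have hu : 0 < Real.exp a / (t * Z) := by positivity
    have h := Real.log_le_sub_one_of_pos hu
    rw [Real.log_div (Real.exp_pos a).ne' (by positivity), Real.log_exp,
      Real.log_mul h0.ne' hZ.ne'] at h
    have hid : t * (Real.exp a / (t * Z)) = Real.exp a / Z := by
      field_simp
    nlinarith [mul_le_mul_of_nonneg_left h ht]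

theorem log_laplace_duality (f : ℝ → EReal) (hf : Measurable f)
    (ef : ℝ → ℝ) (hef : ∀ x, ef x = if f x = ⊥ then 0 else Real.exp (f x).toReal)
    (hInt : Integrable ef) (hpos : 0 < ∫ x, ef x) :
    IsLUB { y : ℝ | ∃ n : ℝ → ℝ, (∀ x, 0 ≤ n x) ∧ Measurable n ∧
        Integrable n ∧ (∫ x, n x) = 1 ∧
        (∀ x, f x = ⊥ → n x = 0) ∧
        Integrable (fun x => (f x).toReal * n x) ∧
        Integrable (fun x => n x * log (n x)) ∧
        y = (∫ x, (f x).toReal * n x) - ∫ x, n x * log (n x) }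
      (log (∫ x, ef x)) := by
  have hefm : Measurable ef := by
    have hfe : ef = fun x => if f x = ⊥ then 0 else Real.exp (f x).toReal := funext hef
    rw [hfe]
    exact Measurable.ite (hf (measurableSet_singleton ⊥)) measurable_const
      (Real.measurable_exp.comp hf.ereal_toReal)
  have hef0 : ∀ x, 0 ≤ ef x := by
    intro x; rw [hef]; split
    · exact le_rfl
    · exact (Real.exp_pos _).le
  set Z := ∫ x, ef x with hZdef
  constructor
  · -- upper bound
    rintro y ⟨n, hn0, hnm, hni, hn1, hnbot, hfi, hli, rfl⟩
    have key : ∀ x, (f x).toReal * n x - n x * log (n x)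
        ≤ ef x / Z - n x + n x * log Z := by
      intro x
      rcases eq_or_lt_of_le (hn0 x) with h0 | h0
      · rw [← h0]
        simp only [mul_zero, zero_mul, log_zero, sub_zero, add_zero, sub_zero]
        have : 0 ≤ ef x / Z := div_nonneg (hef0 x) hpos.le
        linarith
      · have hbot : f x ≠ ⊥ := fun h => absurd (hnbot x h) h0.ne'
        have hefx : ef x = Real.exp (f x).toReal := by rw [hef, if_neg hbot]
        rw [hefx]
        exact gibbs_pointwise _ _ _ hpos (hn0 x)
    have hIL : Integrable (fun x => (f x).toReal * n x - n x * log (n x)) := hfi.sub hli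
    have hIR : Integrable (fun x => ef x / Z - n x + n x * log Z) :=
      ((hInt.div_const Z).sub hni).add (hni.mul_const _)
    have h1 := integral_mono hIL hIR key
    rw [integral_sub hfi hli] at h1
    have h2 : ∫ x, (ef x / Z - n x + n x * log Z) = log Z := by
      have e1 : ∫ x, (ef x / Z - n x + n x * log Z)
          = (∫ x, (ef x / Z - n x)) + ∫ x, n x * log Z :=
        integral_add ((hInt.div_const Z).sub hni) (hni.mul_const _)
      have e2 : ∫ x, (ef x / Z - n x) = (∫ x, ef x / Z) - ∫ x, n x :=
        integral_sub (hInt.div_const Z) hni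
      rw [e1, e2, integral_div, integral_mul_const, hn1, ← hZdef, div_self hpos.ne']
      ring
    rw [h2] at h1
    exact h1
  · -- least upper bound
    intro b hb
    set A : ℕ → Set ℝ := fun k => {x | |x| ≤ k ∧ |(f x).toReal| ≤ k ∧ f x ≠ ⊥} with hA
    have hAm : ∀ k, MeasurableSet (A k) := by
      intro k
      apply MeasurableSet.inter (measurable_abs measurableSet_Iic)
      apply MeasurableSet.inter
      · exact measurableSet_le (measurable_abs.comp hf.ereal_toReal) measurable_const
      · exact (hf (measurableSet_singleton ⊥)).compl
    have hmono : Monotone A := by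
      intro k l hkl x hx
      refine ⟨hx.1.trans ?_, hx.2.1.trans ?_, hx.2.2⟩ <;> exact_mod_cast hkl
    set Zk : ℕ → ℝ := fun k => ∫ x in A k, ef x with hZk
    have hU : ∫ x in ⋃ k, A k, ef x = Z := by
      have hmeasU : MeasurableSet (⋃ k, A k) := MeasurableSet.iUnion hAm
      have : (⋃ k, A k).indicator ef = ef := by
        funext x
        by_cases hx : x ∈ ⋃ k, A k
        · rw [Set.indicator_of_mem hx]
        · rw [Set.indicator_of_notMem hx]
          by_cases hbot : f x = ⊥
          · rw [hef, if_pos hbot]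
          · exfalso
            apply hx
            obtain ⟨k, hk⟩ := exists_nat_ge (max (|x|) (|(f x).toReal|))
            exact Set.mem_iUnion.mpr ⟨k, (le_max_left _ _).trans hk,
              (le_max_right _ _).trans hk, hbot⟩
      rw [← integral_indicator hmeasU, this]
    have htend : Tendsto Zk atTop (𝓝 Z) := by
      have := tendsto_setIntegral_of_monotone hAm hmono (hInt.integrableOn)
      rwa [hU] at this
    have hmem : ∀ k, 0 < Zk k → log (Zk k) ∈ { y : ℝ | ∃ n : ℝ → ℝ, (∀ x, 0 ≤ n x) ∧ Measurable n ∧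
        Integrable n ∧ (∫ x, n x) = 1 ∧
        (∀ x, f x = ⊥ → n x = 0) ∧
        Integrable (fun x => (f x).toReal * n x) ∧
        Integrable (fun x => n x * log (n x)) ∧
        y = (∫ x, (f x).toReal * n x) - ∫ x, n x * log (n x) } := by
      intro k hk
      set n : ℝ → ℝ := (A k).indicator (fun x => ef x / Zk k) with hn
      have hn0 : ∀ x, 0 ≤ n x := fun x =>
        Set.indicator_nonneg (fun y _ => div_nonneg (hef0 y) hk.le) x
      have hnm : Measurable n := (hefm.div_const _).indicator (hAm k)
      have hni : Integrable n := (hInt.div_const _).indicator (hAm k)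
      have hn1 : (∫ x, n x) = 1 := by
        rw [hn, integral_indicator (hAm k), integral_div, div_self hk.ne']
      have hnbot : ∀ x, f x = ⊥ → n x = 0 := by
        intro x hx
        exact Set.indicator_of_notMem (fun hxA => hxA.2.2 hx) _
      -- pointwise bounds
      have hbd1 : ∀ x, |(f x).toReal * n x| ≤ (k : ℝ) * n x := by
        intro x
        by_cases hx : x ∈ A k
        · rw [abs_mul, abs_of_nonneg (hn0 x)]
          exact mul_le_mul_of_nonneg_right hx.2.1 (hn0 x)
        · rw [hn, Set.indicator_of_notMem hx]
          simp
      have hfi : Integrable (fun x => (f x).toReal * n x) := by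
        refine Integrable.mono (hni.const_mul (k : ℝ)) ((hf.ereal_toReal.mul hnm).aestronglyMeasurable) ?_
        filter_upwards with x
        rw [Real.norm_eq_abs, Real.norm_eq_abs, abs_of_nonneg (mul_nonneg (Nat.cast_nonneg k) (hn0 x))]
        exact hbd1 x
      have hlogn : ∀ x, x ∈ A k → log (n x) = (f x).toReal - log (Zk k) := by
        intro x hx
        have hefx : ef x = Real.exp (f x).toReal := by rw [hef, if_neg hx.2.2]
        rw [hn, Set.indicator_of_mem hx, hefx,
          Real.log_div (Real.exp_pos _).ne' hk.ne', Real.log_exp]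
      have hbd2 : ∀ x, |n x * log (n x)| ≤ ((k : ℝ) + |log (Zk k)|) * n x := by
        intro x
        by_cases hx : x ∈ A k
        · rw [abs_mul, abs_of_nonneg (hn0 x), mul_comm (n x), hlogn x hx]
          refine mul_le_mul_of_nonneg_right ?_ (hn0 x)
          calc |(f x).toReal - log (Zk k)| ≤ |(f x).toReal| + |log (Zk k)| := abs_sub _ _
            _ ≤ (k : ℝ) + |log (Zk k)| := by linarith [hx.2.1]
        · rw [hn, Set.indicator_of_notMem hx]
          simp
      have hli : Integrable (fun x => n x * log (n x)) := by
        refine Integrable.mono (hni.const_mul ((k : ℝ) + |log (Zk k)|)) ((hnm.mul (hnm.log)).aestronglyMeasurable) ?_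
        filter_upwards with x
        rw [Real.norm_eq_abs, Real.norm_eq_abs,
          abs_of_nonneg (mul_nonneg (by positivity) (hn0 x))]
        exact hbd2 x
      refine ⟨n, hn0, hnm, hni, hn1, hnbot, hfi, hli, ?_⟩
      have hpt : ∀ x, (f x).toReal * n x - n x * log (n x) = n x * log (Zk k) := by
        intro x
        by_cases hx : x ∈ A k
        · rw [hlogn x hx]; ring
        · rw [hn, Set.indicator_of_notMem hx]; simp
      rw [← integral_sub hfi hli]
      have : (fun x => (f x).toReal * n x - n x * log (n x)) = fun x => n x * log (Zk k) :=
        funext hpt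
      rw [this, integral_mul_const, hn1, one_mul]
    have hlogtend : Tendsto (fun k => log (Zk k)) atTop (𝓝 (log Z)) :=
      ((Real.continuousAt_log hpos.ne').tendsto).comp htend
    have hev : ∀ᶠ k in atTop, log (Zk k) ≤ b := by
      filter_upwards [htend.eventually (eventually_gt_nhds hpos)] with k hk
      exact hb (hmem k hk)
    exact le_of_tendsto hlogtend hev
end
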